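/- arXiv:2005.06015 — 8 statements merged into one kernel-verified Lean document; each statement's English description precedes it below -/
import Mathlib

section
/- With the processes A_n := ∑_{i=n}^{N} ω_i ∏_{j=n+1}^{i} (1 - β_j ΔS_j) and D_n := ∑_{i=n}^{N} ω_i ∏_{j=n+1}^{i} (1 - β_j ΔS_j)^2, one has E[A_n | F_n] = E[D_n | F_n] ≤ N - n + 1 almost surely for every n ∈ {0,1,...,N}. -/
/-! Backward induction on `n`. With `K = 1 - β_{n+1} ΔS_{n+1}` one has `A_n = ω_n + K A_{n+1}` and
`D_n = ω_n + K² D_{n+1}`. Put `a = E[ΔS_{n+1} A_{n+1} | F_n]` and `d = E[ΔS_{n+1}² D_{n+1} | F_n]`,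
so that `β_{n+1} = a / d`. Pulling out the `F_n`-measurable `ω_n` and `β_{n+1}`, and using the
tower property with the induction hypothesis `E[A_{n+1} | F_{n+1}] = E[D_{n+1} | F_{n+1}]`, gives
`E[A_n | F_n] = ω_n + E[A_{n+1} | F_n] - a²/d` and
`E[D_n | F_n] = ω_n + E[A_{n+1} | F_n] - 2a²/d + a²/d`. These agree, and since `a²/d ≥ 0` and
`ω_n ≤ 1`, the bound goes up by at most one at each step. -/

open MeasureTheory Finset

/-- `A_n = ∑_{i=n}^N ω_i ∏_{j=n+1}^i (1 - β_j ΔS_j)`. -/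
def Aproc {Ω : Type*} (N : ℕ) (w β ΔS : ℕ → Ω → ℝ) (n : ℕ) (x : Ω) : ℝ :=
  ∑ i ∈ Finset.Icc n N, w i x * ∏ j ∈ Finset.Icc (n + 1) i, (1 - β j x * ΔS j x)

/-- `D_n = ∑_{i=n}^N ω_i ∏_{j=n+1}^i (1 - β_j ΔS_j)²`. -/
def Dproc {Ω : Type*} (N : ℕ) (w β ΔS : ℕ → Ω → ℝ) (n : ℕ) (x : Ω) : ℝ :=
  ∑ i ∈ Finset.Icc n N, w i x * ∏ j ∈ Finset.Icc (n + 1) i, (1 - β j x * ΔS j x) ^ 2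

theorem sum_Icc_mul_prod_Icc_eq_add_mul {R : Type*} [CommSemiring R] (u g : ℕ → R) {n N : ℕ}
    (h : n < N) :
    ∑ i ∈ Icc n N, u i * ∏ j ∈ Icc (n + 1) i, g j
      = u n + g (n + 1) * ∑ i ∈ Icc (n + 1) N, u i * ∏ j ∈ Icc (n + 2) i, g j := by
  rw [Icc_eq_cons_Ioc h.le, sum_cons, Icc_eq_empty (by omega), prod_empty, mul_one, mul_sum,
    ← Icc_add_one_left_eq_Ioc]
  congr 1
  refine sum_congr rfl fun i hi => ?_
  rw [Icc_eq_cons_Ioc (mem_Icc.mp hi).1, prod_cons, ← Icc_add_one_left_eq_Ioc, mul_left_comm]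
  rfl

section Processes

variable {Ω : Type*} (N : ℕ) (w β ΔS : ℕ → Ω → ℝ)

theorem Aproc_self : Aproc N w β ΔS N = w N := by
  funext x
  simp [Aproc]

theorem Dproc_self : Dproc N w β ΔS N = w N := by
  funext x
  simp [Dproc]

theorem Aproc_eq_add_mul {n : ℕ} (h : n < N) :
    Aproc N w β ΔS n = w n + (1 - β (n + 1) * ΔS (n + 1)) * Aproc N w β ΔS (n + 1) := by
  funext x
  exact sum_Icc_mul_prod_Icc_eq_add_mul (w · x) (fun j => 1 - β j x * ΔS j x) h

theorem Dproc_eq_add_mul {n : ℕ} (h : n < N) :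
    Dproc N w β ΔS n = w n + (1 - β (n + 1) * ΔS (n + 1)) ^ 2 * Dproc N w β ΔS (n + 1) := by
  funext x
  exact sum_Icc_mul_prod_Icc_eq_add_mul (w · x) (fun j => (1 - β j x * ΔS j x) ^ 2) h

variable {w} in
theorem Dproc_nonneg (hw : ∀ i, 0 ≤ w i) (n : ℕ) : 0 ≤ Dproc N w β ΔS n := fun x =>
  sum_nonneg fun i _ => mul_nonneg (hw i x) (prod_nonneg fun _ _ => sq_nonneg _)

end Processes

section Integrability

variable {Ω : Type*} {m0 : MeasurableSpace Ω} {μ : Measure Ω} {X D : Ω → ℝ}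

theorem integrable_mul_of_integrable_sq_mul (hX : AEStronglyMeasurable X μ)
    (hD : Integrable D μ) (hD0 : 0 ≤ᵐ[μ] D) (hX2D : Integrable (X ^ 2 * D) μ) :
    Integrable (X * D) μ := by
  refine (hD.add hX2D).mono' (hX.mul hD.1) ?_
  filter_upwards [hD0] with x (hx : 0 ≤ D x)
  have hXx : |X x| ≤ 1 + X x ^ 2 := by nlinarith [sq_abs (X x), sq_nonneg (|X x| - 1)]
  simp only [Pi.add_apply, Pi.mul_apply, Pi.pow_apply, norm_mul, Real.norm_eq_abs,
    abs_of_nonneg hx]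
  nlinarith [mul_le_mul_of_nonneg_right hXx hx]

theorem integrable_sq_mul_of_integrable_one_sub_sq_mul (hX : AEStronglyMeasurable X μ)
    (hD : Integrable D μ) (hD0 : 0 ≤ᵐ[μ] D) (h : Integrable ((1 - X) ^ 2 * D) μ) :
    Integrable (X ^ 2 * D) μ := by
  refine ((hD.add h).const_mul 2).mono' ((hX.pow 2).mul hD.1) ?_
  filter_upwards [hD0] with x (hx : 0 ≤ D x)
  simp only [Pi.add_apply, Pi.sub_apply, Pi.one_apply, Pi.mul_apply, Pi.pow_apply, norm_mul,
    norm_pow, Real.norm_eq_abs, sq_abs, abs_of_nonneg hx]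
  nlinarith [mul_nonneg hx (sq_nonneg (X x - 2))]

end Integrability

section CondExp

variable {Ω : Type*} {m m' m0 : MeasurableSpace Ω} {μ : Measure Ω} {b X A D f g : Ω → ℝ}

theorem condExp_one_sub_mul_mul (hb : StronglyMeasurable[m] b) (hA : Integrable A μ)
    (hXA : Integrable (X * A) μ) (hKA : Integrable ((1 - b * X) * A) μ) :
    μ[(1 - b * X) * A | m] =ᵐ[μ] μ[A | m] - b * μ[X * A | m] := by
  have hbXA : Integrable (b * (X * A)) μ := by
    rw [show b * (X * A) = A - (1 - b * X) * A by ring]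
    exact hA.sub hKA
  rw [show (1 - b * X) * A = A - b * (X * A) by ring]
  exact (condExp_sub hA hbXA m).trans
    (Filter.EventuallyEq.rfl.sub (condExp_mul_of_stronglyMeasurable_left hb hbXA hXA))

theorem condExp_one_sub_mul_sq_mul (hm : m ≤ m0) (hb : StronglyMeasurable[m] b)
    (hX : AEStronglyMeasurable X μ) (hD : Integrable D μ) (hD0 : 0 ≤ᵐ[μ] D)
    (hX2D : Integrable (X ^ 2 * D) μ) (hKD : Integrable ((1 - b * X) ^ 2 * D) μ) :
    μ[(1 - b * X) ^ 2 * D | m]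
      =ᵐ[μ] μ[D | m] - 2 * b * μ[X * D | m] + b ^ 2 * μ[X ^ 2 * D | m] := by
  have hbX : AEStronglyMeasurable (b * X) μ := (hb.mono hm).aestronglyMeasurable.mul hX
  have hbX2D := integrable_sq_mul_of_integrable_one_sub_sq_mul hbX hD hD0 hKD
  have h2bXD : Integrable (2 * b * (X * D)) μ := by
    rw [show 2 * b * (X * D) = 2 * (b * X * D) by ring]
    exact (integrable_mul_of_integrable_sq_mul hbX hD hD0 hbX2D).const_mul 2
  have hb2X2D : Integrable (b ^ 2 * (X ^ 2 * D)) μ := by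
    rw [show b ^ 2 * (X ^ 2 * D) = (b * X) ^ 2 * D by ring]
    exact hbX2D
  rw [show (1 - b * X) ^ 2 * D = D - 2 * b * (X * D) + b ^ 2 * (X ^ 2 * D) by ring]
  exact (condExp_add (hD.sub h2bXD) hb2X2D m).trans <|
    ((condExp_sub hD h2bXD m).trans (Filter.EventuallyEq.rfl.sub
      (condExp_mul_of_stronglyMeasurable_left (hb.const_mul 2) h2bXD
        (integrable_mul_of_integrable_sq_mul hX hD hD0 hX2D)))).add
      (condExp_mul_of_stronglyMeasurable_left (hb.pow 2) hb2X2D hX2D)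

theorem condExp_mul_ae_eq_of_condExp_ae_eq (hX : StronglyMeasurable[m] X) (hf : Integrable f μ)
    (hg : Integrable g μ) (hXf : Integrable (X * f) μ) (hXg : Integrable (X * g) μ)
    (h : μ[f | m] =ᵐ[μ] μ[g | m]) : μ[X * f | m] =ᵐ[μ] μ[X * g | m] :=
  (condExp_mul_of_stronglyMeasurable_left hX hXf hf).trans <|
    (Filter.EventuallyEq.rfl.mul h).trans (condExp_mul_of_stronglyMeasurable_left hX hXg hg).symm

variable [IsFiniteMeasure μ]

theorem condExp_ae_eq_of_condExp_ae_eq_of_le (hmm' : m ≤ m') (hm' : m' ≤ m0)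
    (h : μ[f | m'] =ᵐ[μ] μ[g | m']) : μ[f | m] =ᵐ[μ] μ[g | m] :=
  (condExp_condExp_of_le hmm' hm').symm.trans <|
    (condExp_congr_ae h).trans (condExp_condExp_of_le hmm' hm')

theorem condExp_le_of_condExp_le_of_le (hmm' : m ≤ m') (hm' : m' ≤ m0) {c : ℝ}
    (h : ∀ᵐ x ∂μ, μ[f | m'] x ≤ c) : ∀ᵐ x ∂μ, μ[f | m] x ≤ c := by
  have hmono : μ[μ[f | m'] | m] ≤ᵐ[μ] μ[fun _ => c | m] :=
    condExp_mono integrable_condExp (integrable_const c) h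
  rw [condExp_const (hmm'.trans hm')] at hmono
  filter_upwards [(condExp_condExp_of_le (f := f) hmm' hm').symm, hmono] with x h1 h2
  rwa [h1]

theorem condExp_add_of_stronglyMeasurable_left (hm : m ≤ m0) (hg : StronglyMeasurable[m] g)
    (hgi : Integrable g μ) (hf : Integrable f μ) : μ[g + f | m] =ᵐ[μ] g + μ[f | m] := by
  have h := condExp_add hgi hf m
  rwa [condExp_of_stronglyMeasurable hm hg hgi] at h

end CondExp

/-- The paper's `β_{n+1} = α_{n+1} / δ_{n+1}` for `m = F_n`, `X = ΔS_{n+1}`, `A = A_{n+1}`,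
`D = D_{n+1}`; Lean's `x / 0 = 0` is the paper's convention `0/0 := 0`. -/
noncomputable def hedgeRatio {Ω : Type*} {m0 : MeasurableSpace Ω} (μ : Measure Ω)
    (m : MeasurableSpace Ω) (X A D : Ω → ℝ) : Ω → ℝ :=
  μ[X * A | m] / μ[X ^ 2 * D | m]

section HedgeRatio

variable {Ω : Type*} {m m' m0 : MeasurableSpace Ω} {μ : Measure Ω} [IsFiniteMeasure μ]
  {w β X A D : Ω → ℝ}

theorem condExp_one_sub_hedgeRatio_mul (hmm' : m ≤ m') (hm' : m' ≤ m0)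
    (hX : StronglyMeasurable[m'] X) (hA : Integrable A μ) (hD : Integrable D μ)
    (hD0 : 0 ≤ᵐ[μ] D) (hXA : Integrable (X * A) μ) (hX2D : Integrable (X ^ 2 * D) μ)
    (hKA : Integrable ((1 - hedgeRatio μ m X A D * X) * A) μ)
    (hKD : Integrable ((1 - hedgeRatio μ m X A D * X) ^ 2 * D) μ)
    (hAD : μ[A | m'] =ᵐ[μ] μ[D | m']) :
    μ[(1 - hedgeRatio μ m X A D * X) * A | m]
        =ᵐ[μ] μ[(1 - hedgeRatio μ m X A D * X) ^ 2 * D | m] ∧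
      μ[(1 - hedgeRatio μ m X A D * X) * A | m] ≤ᵐ[μ] μ[A | m] := by
  have hb : StronglyMeasurable[m] (hedgeRatio μ m X A D) :=
    stronglyMeasurable_condExp.div stronglyMeasurable_condExp
  have hX0 : AEStronglyMeasurable X μ := (hX.mono hm').aestronglyMeasurable
  have hXD := integrable_mul_of_integrable_sq_mul hX0 hD hD0 hX2D
  have hDA : μ[D | m] =ᵐ[μ] μ[A | m] := condExp_ae_eq_of_condExp_ae_eq_of_le hmm' hm' hAD.symm
  have hXDA : μ[X * D | m] =ᵐ[μ] μ[X * A | m] := condExp_ae_eq_of_condExp_ae_eq_of_le hmm' hm'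
    (condExp_mul_ae_eq_of_condExp_ae_eq hX hD hA hXD hXA hAD.symm)
  have hd0 : 0 ≤ᵐ[μ] μ[X ^ 2 * D | m] :=
    condExp_nonneg (hD0.mono fun x hx => mul_nonneg (sq_nonneg (X x)) hx)
  have eA := condExp_one_sub_mul_mul hb hA hXA hKA
  have eD := condExp_one_sub_mul_sq_mul (hmm'.trans hm') hb hX0 hD hD0 hX2D hKD
  constructor
  · filter_upwards [eA, eD, hDA, hXDA] with x hAx hDx h1 h2
    simp only [Pi.sub_apply, Pi.add_apply, Pi.mul_apply, Pi.pow_apply, Pi.ofNat_apply] at hAx hDx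
    rw [hAx, hDx, h1, h2]
    simp only [hedgeRatio, Pi.div_apply]
    rcases eq_or_ne (μ[X ^ 2 * D | m] x) 0 with hd | hd
    · simp [hd]
    · field_simp
      ring
  · filter_upwards [eA, hd0] with x hAx hd
    simp only [Pi.sub_apply, Pi.mul_apply, hedgeRatio, Pi.div_apply] at hAx ⊢
    rw [hAx, sub_le_self_iff, div_mul_eq_mul_div, ← sq]
    exact div_nonneg (sq_nonneg _) hd

theorem condExp_add_one_sub_mul_mul_of_ae_eq_hedgeRatio (hmm' : m ≤ m') (hm' : m' ≤ m0)
    (hw : StronglyMeasurable[m] w) (hwi : Integrable w μ) (hX : StronglyMeasurable[m'] X)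
    (hA : Integrable A μ) (hD : Integrable D μ) (hD0 : 0 ≤ᵐ[μ] D)
    (hXA : Integrable (X * A) μ) (hX2D : Integrable (X ^ 2 * D) μ)
    (hβ : β =ᵐ[μ] hedgeRatio μ m X A D)
    (hKA : Integrable (w + (1 - β * X) * A) μ) (hKD : Integrable (w + (1 - β * X) ^ 2 * D) μ)
    (hAD : μ[A | m'] =ᵐ[μ] μ[D | m']) :
    μ[w + (1 - β * X) * A | m] =ᵐ[μ] μ[w + (1 - β * X) ^ 2 * D | m] ∧
      μ[w + (1 - β * X) * A | m] ≤ᵐ[μ] w + μ[A | m] := by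
  set b := hedgeRatio μ m X A D
  have hm : m ≤ m0 := hmm'.trans hm'
  have eA : w + (1 - β * X) * A =ᵐ[μ] w + (1 - b * X) * A := by
    filter_upwards [hβ] with x hx
    simp only [Pi.add_apply, Pi.mul_apply, Pi.sub_apply, hx]
  have eD : w + (1 - β * X) ^ 2 * D =ᵐ[μ] w + (1 - b * X) ^ 2 * D := by
    filter_upwards [hβ] with x hx
    simp only [Pi.add_apply, Pi.mul_apply, Pi.sub_apply, Pi.pow_apply, hx]
  have hKA' : Integrable ((1 - b * X) * A) μ := by
    simpa only [add_sub_cancel_left] using (hKA.congr eA).sub hwi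
  have hKD' : Integrable ((1 - b * X) ^ 2 * D) μ := by
    simpa only [add_sub_cancel_left] using (hKD.congr eD).sub hwi
  obtain ⟨heq, hle⟩ := condExp_one_sub_hedgeRatio_mul hmm' hm' hX hA hD hD0 hXA hX2D hKA' hKD' hAD
  have sA := (condExp_congr_ae eA).trans (condExp_add_of_stronglyMeasurable_left hm hw hwi hKA')
  have sD := (condExp_congr_ae eD).trans (condExp_add_of_stronglyMeasurable_left hm hw hwi hKD')
  refine ⟨sA.trans ((Filter.EventuallyEq.rfl.add heq).trans sD.symm), ?_⟩
  filter_upwards [sA, hle] with x h1 h2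
  simp only [h1, Pi.add_apply]
  exact add_le_add le_rfl h2

end HedgeRatio

theorem stmt_3_general {Ω : Type*} {m0 : MeasurableSpace Ω} (μ : Measure Ω) [IsProbabilityMeasure μ]
    (N : ℕ) (ℱ : Filtration ℕ m0) (ΔS w : ℕ → Ω → ℝ) (αp δp β : ℕ → Ω → ℝ)
    (hw : ∀ n x, w n x ∈ Set.Icc (0 : ℝ) 1)
    (hwa : ∀ n, StronglyMeasurable[ℱ n] (w n))
    (hSa : ∀ n, StronglyMeasurable[ℱ n] (ΔS n))
    (hβ : ∀ n x, β n x = αp n x / δp n x)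
    (hα : ∀ n ∈ Finset.Icc 1 N,
      αp n =ᵐ[μ] μ[fun x => ΔS n x * Aproc N w β ΔS n x | ℱ (n - 1)])
    (hδ : ∀ n ∈ Finset.Icc 1 N,
      δp n =ᵐ[μ] μ[fun x => ΔS n x ^ 2 * Dproc N w β ΔS n x | ℱ (n - 1)])
    (hAint : ∀ n, Integrable (Aproc N w β ΔS n) μ)
    (hDint : ∀ n, Integrable (Dproc N w β ΔS n) μ)
    (hSAint : ∀ n, Integrable (fun x => ΔS n x * Aproc N w β ΔS n x) μ)
    (hSDint : ∀ n, Integrable (fun x => ΔS n x ^ 2 * Dproc N w β ΔS n x) μ) :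
    ∀ n ≤ N,
      μ[Aproc N w β ΔS n | ℱ n] =ᵐ[μ] μ[Dproc N w β ΔS n | ℱ n] ∧
      ∀ᵐ x ∂μ, (μ[Aproc N w β ΔS n | ℱ n]) x ≤ (N : ℝ) - n + 1 := by
  have hwint (n : ℕ) : Integrable (w n) μ :=
    (integrable_const (1 : ℝ)).mono' ((hwa n).mono (ℱ.le n)).aestronglyMeasurable
      (.of_forall fun x => by simpa [abs_of_nonneg (hw n x).1] using (hw n x).2)
  intro n hn
  induction hn using Nat.decreasingInduction with
  | self =>
    rw [Aproc_self, Dproc_self, condExp_of_stronglyMeasurable (ℱ.le N) (hwa N) (hwint N)]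
    exact ⟨.rfl, .of_forall fun x => by linarith [(hw N x).2]⟩
  | of_succ n hn ih =>
    obtain ⟨hAD, hbound⟩ := ih
    have hn1 : n + 1 ∈ Icc 1 N := mem_Icc.mpr ⟨by omega, hn⟩
    have hβ' : β (n + 1) =ᵐ[μ]
        hedgeRatio μ (ℱ n) (ΔS (n + 1)) (Aproc N w β ΔS (n + 1)) (Dproc N w β ΔS (n + 1)) := by
      filter_upwards [hα (n + 1) hn1, hδ (n + 1) hn1] with x h1 h2
      rw [hβ, h1, h2]
      rfl
    have hmono := ℱ.mono n.le_succ
    have hA := Aproc_eq_add_mul N w β ΔS hn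
    have hD := Dproc_eq_add_mul N w β ΔS hn
    obtain ⟨heq, hle⟩ := condExp_add_one_sub_mul_mul_of_ae_eq_hedgeRatio hmono (ℱ.le (n + 1))
      (hwa n) (hwint n) (hSa (n + 1)) (hAint _) (hDint _)
      (.of_forall (Dproc_nonneg N β ΔS (fun i x => (hw i x).1) (n + 1))) (hSAint _) (hSDint _)
      hβ' (hA ▸ hAint n) (hD ▸ hDint n) hAD
    rw [hA, hD]
    refine ⟨heq, ?_⟩
    filter_upwards [hle, condExp_le_of_condExp_le_of_le hmono (ℱ.le _) hbound] with x h1 h2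
    simp only [Pi.add_apply] at h1
    push_cast at h2
    linarith [(hw n x).2]

/-- Lemma 1(2): with `β_n = α_n / δ_n` (`0/0 := 0`, as in Lean's division) defined by the
backward recursion `α_n = E[ΔS_n A_n | F_{n-1}]`, `δ_n = E[ΔS_n² D_n | F_{n-1}]`, one has
`E[A_n | F_n] = E[D_n | F_n] ≤ N - n + 1` a.s. for every `n ∈ {0,…,N}`. -/
theorem stmt_3 {Ω : Type*} {m0 : MeasurableSpace Ω} (μ : Measure Ω) [IsProbabilityMeasure μ]
    (N : ℕ) (ℱ : Filtration ℕ m0) (ΔS w : ℕ → Ω → ℝ) (αp δp β : ℕ → Ω → ℝ)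
    (hw : ∀ n x, w n x ∈ Set.Icc (0 : ℝ) 1)
    (hwa : ∀ n, StronglyMeasurable[ℱ n] (w n))
    (hSa : ∀ n, StronglyMeasurable[ℱ n] (ΔS n))
    (hSloc : ∀ n, Integrable (fun x => ΔS n x ^ 2) μ)
    (hβ : ∀ n x, β n x = αp n x / δp n x)
    (hβ0 : ∀ x, β 0 x = 0)
    (hα : ∀ n ∈ Finset.Icc 1 N,
      αp n =ᵐ[μ] μ[fun x => ΔS n x * Aproc N w β ΔS n x | ℱ (n - 1)])
    (hδ : ∀ n ∈ Finset.Icc 1 N,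
      δp n =ᵐ[μ] μ[fun x => ΔS n x ^ 2 * Dproc N w β ΔS n x | ℱ (n - 1)])
    (hAint : ∀ n, Integrable (Aproc N w β ΔS n) μ)
    (hDint : ∀ n, Integrable (Dproc N w β ΔS n) μ)
    (hSAint : ∀ n, Integrable (fun x => ΔS n x * Aproc N w β ΔS n x) μ)
    (hSDint : ∀ n, Integrable (fun x => ΔS n x ^ 2 * Dproc N w β ΔS n x) μ) :
    ∀ n ≤ N,
      μ[Aproc N w β ΔS n | ℱ n] =ᵐ[μ] μ[Dproc N w β ΔS n | ℱ n] ∧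
      ∀ᵐ x ∂μ, (μ[Aproc N w β ΔS n | ℱ n]) x ≤ (N : ℝ) - n + 1 :=
  stmt_3_general μ N ℱ ΔS w αp δp β hw hwa hSa hβ hα hδ hAint hDint hSAint hSDint
end

section
/- The conditional covariance α_n satisfies α_n^2 ≤ (N - n + 1) δ_n almost surely, so that β_n α_n = α_n^2/δ_n ≤ N - n + 1 wherever δ_n > 0. -/
open MeasureTheory Finset

/-!
Pointwise, Cauchy–Schwarz with weights `ω_i ∈ [0, 1]` gives `A_n² ≤ (∑ ω_i) D_n ≤ (N - n + 1) D_n`,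
hence `(ΔS_n A_n)² ≤ (N - n + 1) ΔS_n² D_n`. Conditioning on `ℱ_{n-1}` preserves this, because
`(E[X | m])² ≤ E[X² | m]` (the conditional variance is nonnegative) and conditional expectation is
monotone.
-/

lemma sq_sum_mul_le_card_mul_sum_mul_sq {ι : Type*} (s : Finset ι) (w a : ι → ℝ)
    (hw : ∀ i ∈ s, w i ∈ Set.Icc (0 : ℝ) 1) :
    (∑ i ∈ s, w i * a i) ^ 2 ≤ #s * ∑ i ∈ s, w i * a i ^ 2 := by
  have hw_sum : ∑ i ∈ s, w i ≤ #s := by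
    simpa using sum_le_card_nsmul s w 1 fun i hi => (hw i hi).2
  calc (∑ i ∈ s, w i * a i) ^ 2 ≤ (∑ i ∈ s, w i) * ∑ i ∈ s, w i * a i ^ 2 :=
        sum_sq_le_sum_mul_sum_of_sq_le_mul s (fun i hi => (hw i hi).1)
          (fun i hi => mul_nonneg (hw i hi).1 (sq_nonneg _)) (fun i _ => le_of_eq (by ring))
    _ ≤ #s * ∑ i ∈ s, w i * a i ^ 2 :=
        mul_le_mul_of_nonneg_right hw_sum
          (sum_nonneg fun i hi => mul_nonneg (hw i hi).1 (sq_nonneg _))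

lemma Aproc_sq_le {Ω : Type*} {N n : ℕ} (hn : n ≤ N) {w : ℕ → Ω → ℝ}
    (hw : ∀ i x, w i x ∈ Set.Icc (0 : ℝ) 1) (β ΔS : ℕ → Ω → ℝ) (x : Ω) :
    Aproc N w β ΔS n x ^ 2 ≤ ((N : ℝ) - n + 1) * Dproc N w β ΔS n x := by
  have hcard : (#(Icc n N) : ℝ) = (N : ℝ) - n + 1 := by
    rw [Nat.card_Icc, Nat.cast_sub (by omega)]
    push_cast
    ring
  rw [Aproc, Dproc, ← hcard]
  simpa only [prod_pow] using
    sq_sum_mul_le_card_mul_sum_mul_sq _ (w · x) _ fun i _ => hw i x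

section CondExp

variable {Ω : Type*} {m m₀ : MeasurableSpace Ω} {μ : Measure[m₀] Ω} [IsFiniteMeasure μ]

lemma sq_condExp_ae_le_condExp_sq (hm : m ≤ m₀) {X : Ω → ℝ} (hX : MemLp X 2 μ) :
    μ[X | m] ^ 2 ≤ᵐ[μ] μ[X ^ 2 | m] := by
  have hvar : 0 ≤ᵐ[μ] ProbabilityTheory.condVar m X μ :=
    condExp_nonneg (ae_of_all _ fun _ => sq_nonneg _)
  filter_upwards [hvar, ProbabilityTheory.condVar_ae_eq_condExp_sq_sub_sq_condExp hm hX]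
    with x hx hx_eq
  simp only [hx_eq, Pi.zero_apply, Pi.sub_apply] at hx
  linarith

lemma sq_condExp_ae_le_condExp_of_sq_le (hm : m ≤ m₀) {f g : Ω → ℝ}
    (hf : AEStronglyMeasurable f μ) (hg : Integrable g μ) (hfg : ∀ᵐ x ∂μ, f x ^ 2 ≤ g x) :
    μ[f | m] ^ 2 ≤ᵐ[μ] μ[g | m] := by
  have hf_sq : Integrable (f ^ 2) μ :=
    hg.mono' (hf.pow 2) (by filter_upwards [hfg] with x hx; simpa using hx)
  filter_upwards [sq_condExp_ae_le_condExp_sq hm ((memLp_two_iff_integrable_sq hf).2 hf_sq),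
    condExp_mono (m := m) hf_sq hg hfg] with x h₁ h₂
  exact h₁.trans h₂

end CondExp

theorem stmt_6_general {Ω : Type*} {m0 : MeasurableSpace Ω} (μ : Measure Ω) [IsProbabilityMeasure μ]
    (N : ℕ) (ℱ : Filtration ℕ m0) (ΔS w : ℕ → Ω → ℝ) (αp δp β : ℕ → Ω → ℝ)
    (hw : ∀ n x, w n x ∈ Set.Icc (0 : ℝ) 1)
    (hα : ∀ n ∈ Finset.Icc 1 N,
      αp n =ᵐ[μ] μ[fun x => ΔS n x * Aproc N w β ΔS n x | ℱ (n - 1)])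
    (hδ : ∀ n ∈ Finset.Icc 1 N,
      δp n =ᵐ[μ] μ[fun x => ΔS n x ^ 2 * Dproc N w β ΔS n x | ℱ (n - 1)])
    (hSAint : ∀ n, Integrable (fun x => ΔS n x * Aproc N w β ΔS n x) μ)
    (hSDint : ∀ n, Integrable (fun x => ΔS n x ^ 2 * Dproc N w β ΔS n x) μ) :
    ∀ n ∈ Finset.Icc 1 N,
      ∀ᵐ x ∂μ, αp n x ^ 2 ≤ ((N : ℝ) - n + 1) * δp n x ∧
        (0 < δp n x → αp n x ^ 2 / δp n x ≤ (N : ℝ) - n + 1) := by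
  intro n hn
  set K : ℝ := (N : ℝ) - n + 1
  have hpt : ∀ x, (ΔS n x * Aproc N w β ΔS n x) ^ 2 ≤ K * (ΔS n x ^ 2 * Dproc N w β ΔS n x) :=
    fun x => by
      rw [mul_pow, mul_left_comm]
      exact mul_le_mul_of_nonneg_left (Aproc_sq_le (mem_Icc.1 hn).2 hw β ΔS x) (sq_nonneg _)
  have hcond := sq_condExp_ae_le_condExp_of_sq_le (ℱ.le (n - 1)) (hSAint n).aestronglyMeasurable
    ((hSDint n).const_mul K) (ae_of_all _ hpt)
  filter_upwards [hα n hn, hδ n hn, hcond,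
    condExp_smul (m := ℱ (n - 1)) (μ := μ) K fun x => ΔS n x ^ 2 * Dproc N w β ΔS n x]
    with x hαx hδx hcondx hsmulx
  have key : αp n x ^ 2 ≤ K * δp n x := by
    simp only [Pi.pow_apply, Pi.smul_apply, smul_eq_mul] at hcondx hsmulx
    rw [hαx, hδx, ← hsmulx]
    exact hcondx
  exact ⟨key, fun hpos => (div_le_iff₀ hpos).2 (by linarith)⟩

/-- The conditional covariance `α_n` satisfies `α_n² ≤ (N - n + 1) δ_n` a.s., so that
`β_n α_n = α_n² / δ_n ≤ N - n + 1` wherever `δ_n > 0`. -/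
theorem stmt_6 {Ω : Type*} {m0 : MeasurableSpace Ω} (μ : Measure Ω) [IsProbabilityMeasure μ]
    (N : ℕ) (ℱ : Filtration ℕ m0) (ΔS w : ℕ → Ω → ℝ) (αp δp β : ℕ → Ω → ℝ)
    (hw : ∀ n x, w n x ∈ Set.Icc (0 : ℝ) 1)
    (hwa : ∀ n, StronglyMeasurable[ℱ n] (w n))
    (hSa : ∀ n, StronglyMeasurable[ℱ n] (ΔS n))
    (hSloc : ∀ n, Integrable (fun x => ΔS n x ^ 2) μ)
    (hβ : ∀ n x, β n x = αp n x / δp n x)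
    (hβ0 : ∀ x, β 0 x = 0)
    (hα : ∀ n ∈ Finset.Icc 1 N,
      αp n =ᵐ[μ] μ[fun x => ΔS n x * Aproc N w β ΔS n x | ℱ (n - 1)])
    (hδ : ∀ n ∈ Finset.Icc 1 N,
      δp n =ᵐ[μ] μ[fun x => ΔS n x ^ 2 * Dproc N w β ΔS n x | ℱ (n - 1)])
    (hAint : ∀ n, Integrable (Aproc N w β ΔS n) μ)
    (hDint : ∀ n, Integrable (Dproc N w β ΔS n) μ)
    (hSAint : ∀ n, Integrable (fun x => ΔS n x * Aproc N w β ΔS n x) μ)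
    (hSDint : ∀ n, Integrable (fun x => ΔS n x ^ 2 * Dproc N w β ΔS n x) μ) :
    ∀ n ∈ Finset.Icc 1 N,
      ∀ᵐ x ∂μ, αp n x ^ 2 ≤ ((N : ℝ) - n + 1) * δp n x ∧
        (0 < δp n x → αp n x ^ 2 / δp n x ≤ (N : ℝ) - n + 1) :=
  stmt_6_general μ N ℱ ΔS w αp δp β hw hα hδ hSAint hSDint
end

section
/- Under the convention β_n η_n = α_n ρ_n (which holds since β_n = α_n/δ_n and ρ_n = η_n/δ_n with 0/0 := 0), for every n ∈ {1,...,N}: E[ΔS_n ∑_{i=n}^{N} ω_i (∑_{j=n+1}^{i} ρ_j ΔS_j ∏_{k=j+1}^{i}(1 - β_k ΔS_k)) | F_{n-1}] = E[ΔS_n ∑_{i=n}^{N} ω_i H_i (∑_{j=n+1}^{i} β_j ΔS_j ∏_{k=j+1}^{i}(1 - β_k ΔS_k)) | F_{n-1}] almost surely. -/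
open MeasureTheory Finset

/-!
Swapping the order of summation turns the difference of the two integrands into
`ΔS_n ∑_{j>n} (ρ_j ΔS_j A_j - β_j ΔS_j B_j)`, where `α_j = E[ΔS_j A_j | F_{j-1}]` and
`η_j = E[ΔS_j B_j | F_{j-1}]`. Given `F_{j-1}` the `j`-th summand has conditional expectation
`ρ_j α_j - β_j η_j = 0`, so by backward induction every tail sum has conditional expectation zero.
As `ρ_j` and `β_j` are unbounded and only the whole sums are assumed integrable, this is done with
conditional expectations in a generalized sense, truncating the predictable coefficients.
-/

section CondExpZero

variable {Ω : Type*} {m m0 : MeasurableSpace Ω} {μ : Measure Ω} {Z : Ω → ℝ}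

/-- `E[Z | m] = 0` in the generalized sense, which asks no integrability of `Z`:
`∫ G Z = 0` for every `m`-measurable `G` making `G Z` integrable. -/
def HasCondExpZero (μ : Measure Ω) (m : MeasurableSpace Ω) (Z : Ω → ℝ) : Prop :=
  ∀ G : Ω → ℝ, StronglyMeasurable[m] G → Integrable (fun x => G x * Z x) μ →
    ∫ x, G x * Z x ∂μ = 0

theorem integral_eq_zero_of_monotone_of_setIntegral_eq_zero {f : Ω → ℝ} {S : ℕ → Set Ω}
    (hS : ∀ c, MeasurableSet (S c)) (hS_mono : Monotone S) (hS_cover : ⋃ c, S c = Set.univ)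
    (hf : Integrable f μ) (h : ∀ c, ∫ x in S c, f x ∂μ = 0) : ∫ x, f x ∂μ = 0 := by
  have hlim := tendsto_setIntegral_of_monotone hS hS_mono (by rw [hS_cover]; exact hf.integrableOn)
  rw [hS_cover, setIntegral_univ] at hlim
  simp only [h] at hlim
  exact tendsto_nhds_unique hlim tendsto_const_nhds

theorem integral_mul_condExp [IsFiniteMeasure μ] (hm : m ≤ m0) {u X : Ω → ℝ} {C : ℝ}
    (hX : Integrable X μ) (hu : StronglyMeasurable[m] u) (hu_bdd : ∀ x, |u x| ≤ C) :
    ∫ x, u x * μ[X|m] x ∂μ = ∫ x, u x * X x ∂μ := by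
  have huX : Integrable (u * X) μ :=
    hX.bdd_mul (hu.mono hm).aestronglyMeasurable (ae_of_all _ hu_bdd)
  calc ∫ x, u x * μ[X|m] x ∂μ = ∫ x, μ[u * X|m] x ∂μ :=
        integral_congr_ae (condExp_mul_of_stronglyMeasurable_left hu huX hX).symm
    _ = ∫ x, u x * X x ∂μ := integral_condExp hm

namespace HasCondExpZero

theorem zero : HasCondExpZero μ m fun _ => 0 := fun G _ _ => by simp

theorem mono {m' : MeasurableSpace Ω} (hZ : HasCondExpZero μ m' Z) (hmm' : m ≤ m') :
    HasCondExpZero μ m Z :=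
  fun G hG => hZ G (hG.mono hmm')

theorem congr {Z' : Ω → ℝ} (hZ : HasCondExpZero μ m Z) (h : Z =ᵐ[μ] Z') :
    HasCondExpZero μ m Z' := by
  intro G hG hGZ
  have h' : (fun x => G x * Z x) =ᵐ[μ] fun x => G x * Z' x := h.mono fun x hx => by simp only [hx]
  rw [← integral_congr_ae h']
  exact hZ G hG (hGZ.congr h'.symm)

theorem condExp_mul_ae_eq_zero [IsFiniteMeasure μ] {m' : MeasurableSpace Ω}
    (hZ : HasCondExpZero μ m Z) (hm'm : m' ≤ m) (hm : m ≤ m0) {G : Ω → ℝ}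
    (hG : StronglyMeasurable[m] G)
    (hGZ : Integrable (fun x => G x * Z x) μ) : μ[fun x => G x * Z x|m'] =ᵐ[μ] 0 := by
  refine (ae_eq_condExp_of_forall_setIntegral_eq (hm'm.trans hm) hGZ
    (fun _ _ _ => integrableOn_zero) (fun s hs _ => ?_) aestronglyMeasurable_const).symm
  have hs' : MeasurableSet[m] s := hm'm _ hs
  rw [integral_zero, ← integral_indicator (hm _ hs')]
  simp_rw [Set.indicator_mul_left]
  refine (hZ _ (hG.indicator hs') ?_).symm
  exact (hGZ.indicator (hm _ hs')).congr (ae_of_all _ fun x => Set.indicator_mul_left _ _ _)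

/-- `a X` and `b Y` need not be integrable: test against `G` only where `G a` and `G b` are
bounded, and exhaust. -/
theorem mul_sub_mul_add [IsFiniteMeasure μ] (hZ : HasCondExpZero μ m Z) (hm : m ≤ m0)
    {X Y a b : Ω → ℝ} (hX : Integrable X μ) (hY : Integrable Y μ)
    (ha : StronglyMeasurable[m] a) (hb : StronglyMeasurable[m] b)
    (hab : a * μ[X|m] =ᵐ[μ] b * μ[Y|m]) :
    HasCondExpZero μ m (fun x => a x * X x - b x * Y x + Z x) := by
  intro G hG hGZ
  set S : ℕ → Set Ω := fun c => {x | |G x * a x| ≤ c ∧ |G x * b x| ≤ c}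
  have hS : ∀ c, MeasurableSet[m] (S c) := fun c =>
    ((continuous_abs.comp_stronglyMeasurable (hG.mul ha)).measurableSet_le
      stronglyMeasurable_const).inter
    ((continuous_abs.comp_stronglyMeasurable (hG.mul hb)).measurableSet_le
      stronglyMeasurable_const)
  have hS_mono : Monotone S := fun c d hcd x hx =>
    ⟨hx.1.trans (by exact_mod_cast hcd), hx.2.trans (by exact_mod_cast hcd)⟩
  have hS_cover : ⋃ c, S c = Set.univ := by
    refine Set.eq_univ_of_forall fun x => Set.mem_iUnion.2 ?_
    obtain ⟨c, hc⟩ := exists_nat_ge (max |G x * a x| |G x * b x|)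
    exact ⟨c, (le_max_left _ _).trans hc, (le_max_right _ _).trans hc⟩
  refine integral_eq_zero_of_monotone_of_setIntegral_eq_zero (fun c => hm _ (hS c)) hS_mono
    hS_cover hGZ fun c => ?_
  set Gc := (S c).indicator G
  have hGc : StronglyMeasurable[m] Gc := hG.indicator (hS c)
  have hGc_bdd {f : Ω → ℝ} (hf : ∀ x ∈ S c, |G x * f x| ≤ c) (x : Ω) : |Gc x * f x| ≤ c := by
    by_cases hx : x ∈ S c
    · simpa only [Gc, Set.indicator_of_mem hx] using hf x hx
    · simp [Gc, hx]
  have hGca := hGc_bdd fun _ hx => hx.1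
  have hGcb := hGc_bdd fun _ hx => hx.2
  have hGca_m : StronglyMeasurable[m] fun x => Gc x * a x := hGc.mul ha
  have hGcb_m : StronglyMeasurable[m] fun x => Gc x * b x := hGc.mul hb
  have hXc : Integrable (fun x => Gc x * a x * X x) μ :=
    hX.bdd_mul (hGca_m.mono hm).aestronglyMeasurable (ae_of_all _ hGca)
  have hYc : Integrable (fun x => Gc x * b x * Y x) μ :=
    hY.bdd_mul (hGcb_m.mono hm).aestronglyMeasurable (ae_of_all _ hGcb)
  have hint_c : Integrable (fun x => Gc x * (a x * X x - b x * Y x + Z x)) μ :=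
    (hGZ.indicator (hm _ (hS c))).congr (ae_of_all _ fun x => Set.indicator_mul_left _ _ _)
  have hZc : Integrable (fun x => Gc x * Z x) μ :=
    ((hint_c.sub hXc).add hYc).congr (ae_of_all _ fun x => by
      simp only [Pi.add_apply, Pi.sub_apply]; ring)
  have hpull : ∫ x, Gc x * a x * X x ∂μ = ∫ x, Gc x * b x * Y x ∂μ := by
    rw [← integral_mul_condExp hm hX hGca_m hGca, ← integral_mul_condExp hm hY hGcb_m hGcb]
    refine integral_congr_ae (hab.mono fun x hx => ?_)
    simp only [Pi.mul_apply] at hx ⊢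
    rw [mul_assoc, hx, mul_assoc]
  calc ∫ x in S c, G x * (a x * X x - b x * Y x + Z x) ∂μ
      = ∫ x, Gc x * (a x * X x - b x * Y x + Z x) ∂μ := by
        rw [← integral_indicator (hm _ (hS c))]; simp only [Gc, Set.indicator_mul_left]
    _ = (∫ x, Gc x * a x * X x ∂μ - ∫ x, Gc x * b x * Y x ∂μ) + ∫ x, Gc x * Z x ∂μ := by
        rw [← integral_sub hXc hYc,
          ← integral_add (f := fun x => Gc x * a x * X x - Gc x * b x * Y x) (hXc.sub hYc) hZc]
        congr 1; ext x; ring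
    _ = 0 := by rw [hpull, sub_self, zero_add, hZ Gc hGc hZc]

/-- The identity `β η = α ρ` behind the theorem: with `ρ = η / δ` and `β = α / δ`, the
conditional expectation of `ρ X - β Y` is `ρ α - β η = 0`. If `D` is not integrable then
`δ = 0` (junk value of `condExp`) and `ρ = β = 0`. -/
theorem div_mul_sub_div_mul_add [IsFiniteMeasure μ] (hZ : HasCondExpZero μ m Z) (hm : m ≤ m0)
    {X Y D α η δ : Ω → ℝ} (hX : Integrable D μ → Integrable X μ)
    (hY : Integrable D μ → Integrable Y μ) (hα : α =ᵐ[μ] μ[X|m]) (hη : η =ᵐ[μ] μ[Y|m])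
    (hδ : δ =ᵐ[μ] μ[D|m]) :
    HasCondExpZero μ m (fun x => η x / δ x * X x - α x / δ x * Y x + Z x) := by
  by_cases hD : Integrable D μ
  · have hdiv : ∀ f : Ω → ℝ, StronglyMeasurable[m] (fun x => μ[f|m] x / μ[D|m] x) := fun _ =>
      (stronglyMeasurable_condExp.measurable.div
        stronglyMeasurable_condExp.measurable).stronglyMeasurable
    refine (hZ.mul_sub_mul_add hm (hX hD) (hY hD) (hdiv Y) (hdiv X)
      (ae_of_all _ fun x => by simp only [Pi.mul_apply]; ring)).congr ?_
    filter_upwards [hα, hη, hδ] with x h₁ h₂ h₃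
    rw [h₁, h₂, h₃]
  · rw [condExp_of_not_integrable hD] at hδ
    refine hZ.congr ?_
    filter_upwards [hδ] with x hx
    simp [hx]

end HasCondExpZero

theorem hasCondExpZero_sum_Icc [IsFiniteMeasure μ] (ℱ : Filtration ℕ m0) {N : ℕ}
    {X Y D α η δ : ℕ → Ω → ℝ} (hX : ∀ j ∈ Icc 1 N, Integrable (D j) μ → Integrable (X j) μ)
    (hY : ∀ j ∈ Icc 1 N, Integrable (D j) μ → Integrable (Y j) μ)
    (hα : ∀ j ∈ Icc 1 N, α j =ᵐ[μ] μ[X j|ℱ (j - 1)])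
    (hη : ∀ j ∈ Icc 1 N, η j =ᵐ[μ] μ[Y j|ℱ (j - 1)])
    (hδ : ∀ j ∈ Icc 1 N, δ j =ᵐ[μ] μ[D j|ℱ (j - 1)]) {t : ℕ} (ht : t ≤ N) :
    HasCondExpZero μ (ℱ t)
      (fun x => ∑ j ∈ Icc (t + 1) N, (η j x / δ j x * X j x - α j x / δ j x * Y j x)) := by
  induction ht using Nat.decreasingInduction with
  | self => simpa using HasCondExpZero.zero
  | of_succ k hk ih =>
    have hk' : k + 1 ∈ Icc 1 N := mem_Icc.2 ⟨k.succ_pos, hk⟩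
    refine ((ih.mono (ℱ.mono k.le_succ)).div_mul_sub_div_mul_add (ℱ.le k) (hX _ hk')
      (hY _ hk') (hα _ hk') (hη _ hk') (hδ _ hk')).congr (ae_of_all _ fun x => ?_)
    dsimp only
    rw [← insert_Icc_add_one_left_eq_Icc (Nat.succ_le_of_lt hk), sum_insert (by simp)]

end CondExpZero

theorem sum_Icc_mul_sum_Icc_comm {R : Type*} [CommSemiring R] (n N : ℕ) (a c : ℕ → R)
    (p : ℕ → ℕ → R) :
    ∑ i ∈ Icc n N, a i * ∑ j ∈ Icc (n + 1) i, c j * p j i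
      = ∑ j ∈ Icc (n + 1) N, c j * ∑ i ∈ Icc j N, a i * p j i := by
  simp_rw [mul_sum]
  rw [sum_comm' (t' := Icc (n + 1) N) (s' := fun j => Icc j N)
    (by intro i j; simp only [mem_Icc]; omega)]
  exact sum_congr rfl fun j _ => sum_congr rfl fun i _ => by ring

theorem abs_mul_sum_mul_le {ι : Type*} (s : ℝ) (S : Finset ι) (u v P : ι → ℝ)
    (hv : ∀ i ∈ S, v i ∈ Set.Icc 0 1) :
    |s * ∑ i ∈ S, u i * v i * P i| ≤ (∑ i ∈ S, u i ^ 2 + s ^ 2 * ∑ i ∈ S, v i * P i ^ 2) / 2 := by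
  rw [mul_sum, mul_sum, ← sum_add_distrib, sum_div]
  refine (abs_sum_le_sum_abs _ _).trans (sum_le_sum fun i hi => ?_)
  obtain ⟨hv₀, hv₁⟩ := hv i hi
  rw [show s * (u i * v i * P i) = v i * (u i * (s * P i)) by ring, abs_mul, abs_of_nonneg hv₀]
  have hamgm : |u i * (s * P i)| ≤ (u i ^ 2 + (s * P i) ^ 2) / 2 := by
    rw [abs_mul]
    nlinarith [two_mul_le_add_sq |u i| |s * P i|, sq_abs (u i), sq_abs (s * P i)]
  nlinarith [mul_le_mul_of_nonneg_left hamgm hv₀, mul_le_of_le_one_left (sq_nonneg (u i)) hv₁]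

section Hedging

variable {Ω : Type*} {m0 : MeasurableSpace Ω} {μ : Measure Ω} {N : ℕ} {w H β ΔS : ℕ → Ω → ℝ}

/-- `η_n = E[ΔS_n B_n | F_{n-1}]`, as `α_n` and `δ_n` are obtained from `Aproc` and `Dproc`. -/
def Bproc (N : ℕ) (w H β ΔS : ℕ → Ω → ℝ) (n : ℕ) (x : Ω) : ℝ :=
  ∑ i ∈ Icc n N, H i x * w i x * ∏ j ∈ Icc (n + 1) i, (1 - β j x * ΔS j x)

theorem Aproc_eq_Bproc_one : Aproc N w β ΔS = Bproc N w (fun _ _ => 1) β ΔS := by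
  ext n x
  simp [Aproc, Bproc]

theorem Dproc_eq_sum_mul_sq (n : ℕ) (x : Ω) :
    Dproc N w β ΔS n x =
      ∑ i ∈ Icc n N, w i x * (∏ j ∈ Icc (n + 1) i, (1 - β j x * ΔS j x)) ^ 2 := by
  simp only [Dproc, prod_pow]

theorem aestronglyMeasurable_Bproc (hw : ∀ i, AEStronglyMeasurable (w i) μ)
    (hH : ∀ i, AEStronglyMeasurable (H i) μ) (hβ : ∀ k ∈ Icc 1 N, AEStronglyMeasurable (β k) μ)
    (hS : ∀ k, AEStronglyMeasurable (ΔS k) μ) (n : ℕ) :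
    AEStronglyMeasurable (Bproc N w H β ΔS n) μ :=
  Finset.aestronglyMeasurable_fun_sum _ fun i hi => ((hH i).mul (hw i)).mul <|
    Finset.aestronglyMeasurable_fun_prod _ fun k hk => aestronglyMeasurable_const.sub <|
      (hβ k (by simp only [mem_Icc] at hi hk ⊢; omega)).mul (hS k)

theorem integrable_mul_Bproc [IsFiniteMeasure μ] (hw : ∀ i x, w i x ∈ Set.Icc (0 : ℝ) 1)
    (hH : ∀ i, MemLp (H i) 2 μ) {n : ℕ} (hS : AEStronglyMeasurable (ΔS n) μ)
    (hB : AEStronglyMeasurable (Bproc N w H β ΔS n) μ)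
    (hD : Integrable (fun x => ΔS n x ^ 2 * Dproc N w β ΔS n x) μ) :
    Integrable (fun x => ΔS n x * Bproc N w H β ΔS n x) μ := by
  refine Integrable.mono' (((integrable_finsetSum (Icc n N) fun i _ => (hH i).integrable_sq).add
    hD).div_const 2) (hS.mul hB) (ae_of_all _ fun x => ?_)
  rw [Real.norm_eq_abs, Pi.add_apply, Dproc_eq_sum_mul_sq]
  exact abs_mul_sum_mul_le _ _ _ _ _ fun i _ => hw i x

theorem mul_sum_sub_mul_sum_eq_mul_sum_Aproc_Bproc (ρ : ℕ → Ω → ℝ) (n : ℕ) (x : Ω) :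
    ΔS n x * ∑ i ∈ Icc n N, w i x * ∑ j ∈ Icc (n + 1) i, ρ j x * ΔS j x *
        ∏ k ∈ Icc (j + 1) i, (1 - β k x * ΔS k x)
      - ΔS n x * ∑ i ∈ Icc n N, w i x * H i x * ∑ j ∈ Icc (n + 1) i, β j x * ΔS j x *
        ∏ k ∈ Icc (j + 1) i, (1 - β k x * ΔS k x)
    = ΔS n x * ∑ j ∈ Icc (n + 1) N, (ρ j x * (ΔS j x * Aproc N w β ΔS j x)
        - β j x * (ΔS j x * Bproc N w H β ΔS j x)) := by
  rw [sum_Icc_mul_sum_Icc_comm, sum_Icc_mul_sum_Icc_comm, sum_sub_distrib, mul_sub]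
  simp only [Aproc, Bproc, mul_assoc, mul_comm (H _ x)]

end Hedging

theorem stmt_9_general {Ω : Type*} {m0 : MeasurableSpace Ω} (μ : Measure Ω) [IsProbabilityMeasure μ]
    (N : ℕ) (ℱ : Filtration ℕ m0) (ΔS w H : ℕ → Ω → ℝ) (αp ηp δp β ρ : ℕ → Ω → ℝ)
    (hw : ∀ n x, w n x ∈ Set.Icc (0 : ℝ) 1)
    (hwa : ∀ n, StronglyMeasurable[ℱ n] (w n))
    (hSa : ∀ n, StronglyMeasurable[ℱ n] (ΔS n))
    (hH : ∀ n, MemLp (H n) 2 μ)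
    (hβ : ∀ n x, β n x = αp n x / δp n x)
    (hρ : ∀ n x, ρ n x = ηp n x / δp n x)
    (hα : ∀ n ∈ Finset.Icc 1 N,
      αp n =ᵐ[μ] μ[fun x => ΔS n x * Aproc N w β ΔS n x | ℱ (n - 1)])
    (hη : ∀ n ∈ Finset.Icc 1 N,
      ηp n =ᵐ[μ] μ[fun x => ΔS n x *
        ∑ i ∈ Finset.Icc n N, H i x * w i x *
          ∏ j ∈ Finset.Icc (n + 1) i, (1 - β j x * ΔS j x) | ℱ (n - 1)])
    (hδ : ∀ n ∈ Finset.Icc 1 N,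
      δp n =ᵐ[μ] μ[fun x => ΔS n x ^ 2 * Dproc N w β ΔS n x | ℱ (n - 1)])
    (hint1 : ∀ n, Integrable (fun x => ΔS n x * ∑ i ∈ Finset.Icc n N, w i x *
        ∑ j ∈ Finset.Icc (n + 1) i, ρ j x * ΔS j x *
          ∏ k ∈ Finset.Icc (j + 1) i, (1 - β k x * ΔS k x)) μ)
    (hint2 : ∀ n, Integrable (fun x => ΔS n x * ∑ i ∈ Finset.Icc n N, w i x * H i x *
        ∑ j ∈ Finset.Icc (n + 1) i, β j x * ΔS j x *
          ∏ k ∈ Finset.Icc (j + 1) i, (1 - β k x * ΔS k x)) μ) :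
    ∀ n ∈ Finset.Icc 1 N,
      μ[fun x => ΔS n x * ∑ i ∈ Finset.Icc n N, w i x *
          ∑ j ∈ Finset.Icc (n + 1) i, ρ j x * ΔS j x *
            ∏ k ∈ Finset.Icc (j + 1) i, (1 - β k x * ΔS k x) | ℱ (n - 1)]
        =ᵐ[μ]
      μ[fun x => ΔS n x * ∑ i ∈ Finset.Icc n N, w i x * H i x *
          ∑ j ∈ Finset.Icc (n + 1) i, β j x * ΔS j x *
            ∏ k ∈ Finset.Icc (j + 1) i, (1 - β k x * ΔS k x) | ℱ (n - 1)] := by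
  intro n hn
  have hSm k : AEStronglyMeasurable (ΔS k) μ := ((hSa k).mono (ℱ.le k)).aestronglyMeasurable
  have hwm k : AEStronglyMeasurable (w k) μ := ((hwa k).mono (ℱ.le k)).aestronglyMeasurable
  have hβm : ∀ k ∈ Icc 1 N, AEStronglyMeasurable (β k) μ := fun k hk => by
    rw [show β k = fun x => αp k x / δp k x from funext (hβ k)]
    exact ((integrable_condExp.1.congr (hα k hk).symm).aemeasurable.div
      (integrable_condExp.1.congr (hδ k hk).symm).aemeasurable).aestronglyMeasurable
  have hB {H' : ℕ → Ω → ℝ} (hH' : ∀ i, MemLp (H' i) 2 μ) (j : ℕ)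
      (hD : Integrable (fun x => ΔS j x ^ 2 * Dproc N w β ΔS j x) μ) :
      Integrable (fun x => ΔS j x * Bproc N w H' β ΔS j x) μ :=
    integrable_mul_Bproc hw hH' (hSm j)
      (aestronglyMeasurable_Bproc hwm (fun i => (hH' i).1) hβm hSm j) hD
  have hZ := hasCondExpZero_sum_Icc ℱ (X := fun j x => ΔS j x * Aproc N w β ΔS j x)
    (Y := fun j x => ΔS j x * Bproc N w H β ΔS j x)
    (fun j _ hD => by simpa only [Aproc_eq_Bproc_one] using hB (fun _ => memLp_const 1) j hD)
    (fun j _ => hB hH j) hα hη hδ (mem_Icc.1 hn).2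
  have hdiff := mul_sum_sub_mul_sum_eq_mul_sum_Aproc_Bproc (N := N) (w := w) (H := H) (β := β)
    (ΔS := ΔS) ρ n
  have hdiff_int : Integrable (fun x => ΔS n x * ∑ j ∈ Icc (n + 1) N, (ρ j x * (ΔS j x *
      Aproc N w β ΔS j x) - β j x * (ΔS j x * Bproc N w H β ΔS j x))) μ :=
    ((hint1 n).sub (hint2 n)).congr (ae_of_all _ hdiff)
  have h0 := (hZ.congr (ae_of_all _ fun x => by simp only [hρ, hβ])).condExp_mul_ae_eq_zero
    (ℱ.mono (n.sub_le 1)) (ℱ.le n) (hSa n) hdiff_int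
  refine (sub_ae_eq_zero _ _).1 ((condExp_sub (hint1 n) (hint2 n) _).symm.trans ?_)
  convert h0 using 2
  exact funext hdiff

/-- Lemma 2: since `β_n η_n = α_n ρ_n` (as `β = α/δ`, `ρ = η/δ` with `0/0 := 0`),
for every `n ∈ {1,…,N}`:
`E[ΔS_n ∑_{i=n}^N ω_i (∑_{j=n+1}^i ρ_j ΔS_j ∏_{k=j+1}^i (1 - β_k ΔS_k)) | F_{n-1}]
 = E[ΔS_n ∑_{i=n}^N ω_i H_i (∑_{j=n+1}^i β_j ΔS_j ∏_{k=j+1}^i (1 - β_k ΔS_k)) | F_{n-1}]`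
almost surely. -/
theorem stmt_9 {Ω : Type*} {m0 : MeasurableSpace Ω} (μ : Measure Ω) [IsProbabilityMeasure μ]
    (N : ℕ) (ℱ : Filtration ℕ m0) (ΔS w H : ℕ → Ω → ℝ) (αp ηp δp β ρ : ℕ → Ω → ℝ)
    (hw : ∀ n x, w n x ∈ Set.Icc (0 : ℝ) 1)
    (hwa : ∀ n, StronglyMeasurable[ℱ n] (w n))
    (hHa : ∀ n, StronglyMeasurable[ℱ n] (H n))
    (hSa : ∀ n, StronglyMeasurable[ℱ n] (ΔS n))
    (hH : ∀ n, MemLp (H n) 2 μ)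
    (hSloc : ∀ n, Integrable (fun x => ΔS n x ^ 2) μ)
    (hβ : ∀ n x, β n x = αp n x / δp n x)
    (hρ : ∀ n x, ρ n x = ηp n x / δp n x)
    (hβ0 : ∀ x, β 0 x = 0) (hρ0 : ∀ x, ρ 0 x = 0)
    (hα : ∀ n ∈ Finset.Icc 1 N,
      αp n =ᵐ[μ] μ[fun x => ΔS n x * Aproc N w β ΔS n x | ℱ (n - 1)])
    (hη : ∀ n ∈ Finset.Icc 1 N,
      ηp n =ᵐ[μ] μ[fun x => ΔS n x *
        ∑ i ∈ Finset.Icc n N, H i x * w i x *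
          ∏ j ∈ Finset.Icc (n + 1) i, (1 - β j x * ΔS j x) | ℱ (n - 1)])
    (hδ : ∀ n ∈ Finset.Icc 1 N,
      δp n =ᵐ[μ] μ[fun x => ΔS n x ^ 2 * Dproc N w β ΔS n x | ℱ (n - 1)])
    (hint1 : ∀ n, Integrable (fun x => ΔS n x * ∑ i ∈ Finset.Icc n N, w i x *
        ∑ j ∈ Finset.Icc (n + 1) i, ρ j x * ΔS j x *
          ∏ k ∈ Finset.Icc (j + 1) i, (1 - β k x * ΔS k x)) μ)
    (hint2 : ∀ n, Integrable (fun x => ΔS n x * ∑ i ∈ Finset.Icc n N, w i x * H i x *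
        ∑ j ∈ Finset.Icc (n + 1) i, β j x * ΔS j x *
          ∏ k ∈ Finset.Icc (j + 1) i, (1 - β k x * ΔS k x)) μ) :
    ∀ n ∈ Finset.Icc 1 N,
      μ[fun x => ΔS n x * ∑ i ∈ Finset.Icc n N, w i x *
          ∑ j ∈ Finset.Icc (n + 1) i, ρ j x * ΔS j x *
            ∏ k ∈ Finset.Icc (j + 1) i, (1 - β k x * ΔS k x) | ℱ (n - 1)]
        =ᵐ[μ]
      μ[fun x => ΔS n x * ∑ i ∈ Finset.Icc n N, w i x * H i x *
          ∑ j ∈ Finset.Icc (n + 1) i, β j x * ΔS j x *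
            ∏ k ∈ Finset.Icc (j + 1) i, (1 - β k x * ΔS k x) | ℱ (n - 1)] :=
  stmt_9_general μ N ℱ ΔS w H αp ηp δp β ρ hw hwa hSa hH hβ hρ hα hη hδ hint1 hint2
end

section
/- If the weights ω_n are deterministic constants and S is a square-integrable (F_n)-martingale, then α_n = 0 for all n, hence β_n = 0, and the optimal hedging strategy is ξ*_n = ρ_n = (∑_{i=n}^{N} ω_i E[H_i ΔS_n | F_{n-1}]) / (∑_{i=n}^{N} ω_i E[ΔS_n^2 | F_{n-1}]), which does not depend on the initial capital c (with 0/0 := 0). -/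
/-! With constant weights, once `β_j = 0` for all `j > n` every product `∏ (1 - β_j ΔS_j)`
equals `1`, so `A_n` is the constant `∑_{i ≥ n} ω_i` and `α_n = (∑_{i ≥ n} ω_i) E[ΔS_n | F_{n-1}]`
vanishes by the martingale property; hence `β_n = α_n / δ_n = 0`. Backward induction from `N`
gives `β ≡ 0`, after which `ξ*_n = ρ_n` and `η_n`, `δ_n` collapse to weighted sums of conditional
expectations. -/

open MeasureTheory Finset

section Algebra

variable {Ω : Type*} {N n : ℕ} {β ΔS : ℕ → Ω → ℝ} {x : Ω}

lemma prod_one_sub_mul_eq_one_of_beta_eq_zero (hβ : ∀ j ∈ Icc (n + 1) N, β j x = 0)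
    {i : ℕ} (hi : i ∈ Icc n N) : ∏ j ∈ Icc (n + 1) i, (1 - β j x * ΔS j x) = 1 :=
  prod_eq_one fun j hj => by
    rw [hβ j (Icc_subset_Icc_right (mem_Icc.mp hi).2 hj), zero_mul, sub_zero]

lemma Aproc_eq_sum_of_beta_eq_zero (w : ℕ → Ω → ℝ) (hβ : ∀ j ∈ Icc (n + 1) N, β j x = 0) :
    Aproc N w β ΔS n x = ∑ i ∈ Icc n N, w i x :=
  sum_congr rfl fun i hi => by rw [prod_one_sub_mul_eq_one_of_beta_eq_zero hβ hi, mul_one]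

lemma Dproc_eq_sum_of_beta_eq_zero (w : ℕ → Ω → ℝ) (hβ : ∀ j ∈ Icc (n + 1) N, β j x = 0) :
    Dproc N w β ΔS n x = ∑ i ∈ Icc n N, w i x :=
  sum_congr rfl fun i hi => by
    rw [prod_pow, prod_one_sub_mul_eq_one_of_beta_eq_zero hβ hi, one_pow, mul_one]

end Algebra

section CondExp

variable {Ω : Type*} {m0 : MeasurableSpace Ω} {μ : Measure Ω} {m : MeasurableSpace Ω}
  {N n : ℕ} {β ΔS w : ℕ → Ω → ℝ} {ω : ℕ → ℝ}

lemma ae_forall_beta_eq_zero (hβ : ∀ j ∈ Icc (n + 1) N, β j =ᵐ[μ] 0) :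
    ∀ᵐ x ∂μ, ∀ j ∈ Icc (n + 1) N, β j x = 0 :=
  (Filter.eventually_all_finset _).mpr hβ

lemma condExp_mul_Aproc_ae_eq_zero (hw : ∀ i x, w i x = ω i)
    (hβ : ∀ j ∈ Icc (n + 1) N, β j =ᵐ[μ] 0) (hmart : μ[ΔS n | m] =ᵐ[μ] 0) :
    μ[fun x => ΔS n x * Aproc N w β ΔS n x | m] =ᵐ[μ] 0 := by
  have hA : (fun x => ΔS n x * Aproc N w β ΔS n x) =ᵐ[μ] (∑ i ∈ Icc n N, ω i) • ΔS n := by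
    filter_upwards [ae_forall_beta_eq_zero hβ] with x hx
    simp only [Aproc_eq_sum_of_beta_eq_zero w hx, hw, Pi.smul_apply, smul_eq_mul, mul_comm]
  filter_upwards [condExp_congr_ae (m := m) hA, condExp_smul (∑ i ∈ Icc n N, ω i) (ΔS n) m,
    hmart] with x hx hsmul hzero
  rw [hx, hsmul, Pi.smul_apply, hzero, Pi.zero_apply, smul_zero]

lemma condExp_sq_mul_Dproc_ae_eq (hw : ∀ i x, w i x = ω i)
    (hβ : ∀ j ∈ Icc (n + 1) N, β j =ᵐ[μ] 0) :
    μ[fun x => ΔS n x ^ 2 * Dproc N w β ΔS n x | m] =ᵐ[μ]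
      fun x => ∑ i ∈ Icc n N, ω i * μ[fun y => ΔS n y ^ 2 | m] x := by
  have hD : (fun x => ΔS n x ^ 2 * Dproc N w β ΔS n x) =ᵐ[μ]
      (∑ i ∈ Icc n N, ω i) • fun y => ΔS n y ^ 2 := by
    filter_upwards [ae_forall_beta_eq_zero hβ] with x hx
    simp only [Dproc_eq_sum_of_beta_eq_zero w hx, hw, Pi.smul_apply, smul_eq_mul, mul_comm]
  filter_upwards [condExp_congr_ae (m := m) hD,
    condExp_smul (∑ i ∈ Icc n N, ω i) (fun y => ΔS n y ^ 2) m] with x hx hsmul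
  rw [hx, hsmul, Pi.smul_apply, smul_eq_mul, sum_mul]

lemma condExp_mul_weighted_payoff_ae_eq {H : ℕ → Ω → ℝ} (hw : ∀ i x, w i x = ω i)
    (hβ : ∀ j ∈ Icc (n + 1) N, β j =ᵐ[μ] 0)
    (hHS : ∀ i, Integrable (fun x => H i x * ΔS n x) μ) :
    μ[fun x => ΔS n x * ∑ i ∈ Icc n N, H i x * w i x *
        ∏ j ∈ Icc (n + 1) i, (1 - β j x * ΔS j x) | m] =ᵐ[μ]
      fun x => ∑ i ∈ Icc n N, ω i * μ[fun y => H i y * ΔS n y | m] x := by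
  have hsum : (fun x => ΔS n x * ∑ i ∈ Icc n N, H i x * w i x *
        ∏ j ∈ Icc (n + 1) i, (1 - β j x * ΔS j x)) =ᵐ[μ]
      ∑ i ∈ Icc n N, ω i • fun y => H i y * ΔS n y := by
    filter_upwards [ae_forall_beta_eq_zero hβ] with x hx
    rw [Finset.sum_apply, mul_sum]
    refine sum_congr rfl fun i hi => ?_
    rw [prod_one_sub_mul_eq_one_of_beta_eq_zero hx hi, hw, Pi.smul_apply, smul_eq_mul]
    ring
  have hsmul : ∀ᵐ x ∂μ, ∀ i ∈ Icc n N,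
      μ[ω i • fun y => H i y * ΔS n y | m] x = ω i * μ[fun y => H i y * ΔS n y | m] x :=
    (Filter.eventually_all_finset _).mpr fun i _ => condExp_smul (ω i) _ m
  filter_upwards [condExp_congr_ae (m := m) hsum,
    condExp_finsetSum (fun i _ => (hHS i).smul (ω i)) m, hsmul] with x hx hfin hx'
  rw [hx, hfin, Finset.sum_apply]
  exact sum_congr rfl hx'

end CondExp

lemma beta_ae_eq_zero_of_martingale {Ω : Type*} {m0 : MeasurableSpace Ω} {μ : Measure Ω}
    {N : ℕ} {ℱ : ℕ → MeasurableSpace Ω} {ΔS w αp δp β : ℕ → Ω → ℝ} {ω : ℕ → ℝ}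
    (hβ : ∀ n x, β n x = αp n x / δp n x)
    (hα : ∀ n ∈ Icc 1 N, αp n =ᵐ[μ] μ[fun x => ΔS n x * Aproc N w β ΔS n x | ℱ (n - 1)])
    (hw : ∀ i x, w i x = ω i) (hmart : ∀ n ∈ Icc 1 N, μ[ΔS n | ℱ (n - 1)] =ᵐ[μ] 0) :
    ∀ n ∈ Icc 1 N, β n =ᵐ[μ] 0 := by
  intro n hn
  induction hk : N - n using Nat.strong_induction_on generalizing n with
  | _ k ih =>
    have hlater : ∀ j ∈ Icc (n + 1) N, β j =ᵐ[μ] 0 := fun j hj => by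
      simp only [mem_Icc] at hn hj
      exact ih (N - j) (by omega) j (mem_Icc.mpr ⟨by omega, hj.2⟩) rfl
    filter_upwards [(hα n hn).trans (condExp_mul_Aproc_ae_eq_zero hw hlater (hmart n hn))]
      with x hx
    rw [hβ, hx, Pi.zero_apply, zero_div]

theorem stmt_11_general {Ω : Type*} {m0 : MeasurableSpace Ω} (μ : Measure Ω)
    (N : ℕ) (ℱ : Filtration ℕ m0) (ΔS w H : ℕ → Ω → ℝ) (αp ηp δp β ρ : ℕ → Ω → ℝ)
    (hβ : ∀ n x, β n x = αp n x / δp n x)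
    (hρ : ∀ n x, ρ n x = ηp n x / δp n x)
    (hα : ∀ n ∈ Finset.Icc 1 N,
      αp n =ᵐ[μ] μ[fun x => ΔS n x * Aproc N w β ΔS n x | ℱ (n - 1)])
    (hη : ∀ n ∈ Finset.Icc 1 N,
      ηp n =ᵐ[μ] μ[fun x => ΔS n x *
        ∑ i ∈ Finset.Icc n N, H i x * w i x *
          ∏ j ∈ Finset.Icc (n + 1) i, (1 - β j x * ΔS j x) | ℱ (n - 1)])
    (hδ : ∀ n ∈ Finset.Icc 1 N,
      δp n =ᵐ[μ] μ[fun x => ΔS n x ^ 2 * Dproc N w β ΔS n x | ℱ (n - 1)])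
    (ωc : ℕ → ℝ) (hωc : ∀ n x, w n x = ωc n)
    (hmart : ∀ n ∈ Finset.Icc 1 N, μ[ΔS n | ℱ (n - 1)] =ᵐ[μ] 0)
    (c : ℝ) (ξstar : ℕ → Ω → ℝ)
    (hξ : ∀ n ∈ Finset.Icc 1 N, ∀ x, ξstar n x
      = ρ n x - β n x * (c + ∑ k ∈ Finset.Icc 1 (n - 1), ξstar k x * ΔS k x))
    (hHS : ∀ n i, Integrable (fun x => H i x * ΔS n x) μ) :
    ∀ n ∈ Finset.Icc 1 N,
      αp n =ᵐ[μ] 0 ∧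
      β n =ᵐ[μ] 0 ∧
      ξstar n =ᵐ[μ] ρ n ∧
      ρ n =ᵐ[μ] fun x =>
        (∑ i ∈ Finset.Icc n N, ωc i * (μ[fun y => H i y * ΔS n y | ℱ (n - 1)]) x)
          / (∑ i ∈ Finset.Icc n N, ωc i * (μ[fun y => ΔS n y ^ 2 | ℱ (n - 1)]) x) := by
  have hβzero := beta_ae_eq_zero_of_martingale hβ hα hωc hmart
  intro n hn
  have hlater : ∀ j ∈ Icc (n + 1) N, β j =ᵐ[μ] 0 := fun j hj =>
    hβzero j (Icc_subset_Icc_left (by omega) hj)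
  refine ⟨(hα n hn).trans (condExp_mul_Aproc_ae_eq_zero hωc hlater (hmart n hn)),
    hβzero n hn, ?_, ?_⟩
  · filter_upwards [hβzero n hn] with x hx
    rw [hξ n hn x, hx, Pi.zero_apply, zero_mul, sub_zero]
  · filter_upwards [(hη n hn).trans (condExp_mul_weighted_payoff_ae_eq hωc hlater (hHS n)),
      (hδ n hn).trans (condExp_sq_mul_Dproc_ae_eq hωc hlater)] with x hη' hδ'
    rw [hρ, hη', hδ']

/-- Corollary 1: if the weights are deterministic constants and `S` is a square-integrable
martingale, then `α_n = 0` a.s., hence `β_n = 0` a.s., and the optimal strategy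
`ξ*_n = ρ_n - β_n (c + G_{n-1}(ξ*))` reduces a.s. to
`ξ*_n = ρ_n = (∑_{i=n}^N ω_i E[H_i ΔS_n | F_{n-1}]) / (∑_{i=n}^N ω_i E[ΔS_n² | F_{n-1}])`,
independent of the initial capital `c` (with `0/0 := 0`). -/
theorem stmt_11 {Ω : Type*} {m0 : MeasurableSpace Ω} (μ : Measure Ω) [IsProbabilityMeasure μ]
    (N : ℕ) (ℱ : Filtration ℕ m0) (ΔS w H : ℕ → Ω → ℝ) (αp ηp δp β ρ : ℕ → Ω → ℝ)
    (hw : ∀ n x, w n x ∈ Set.Icc (0 : ℝ) 1)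
    (hwa : ∀ n, StronglyMeasurable[ℱ n] (w n))
    (hHa : ∀ n, StronglyMeasurable[ℱ n] (H n))
    (hSa : ∀ n, StronglyMeasurable[ℱ n] (ΔS n))
    (hH : ∀ n, MemLp (H n) 2 μ)
    (hSloc : ∀ n, Integrable (fun x => ΔS n x ^ 2) μ)
    (hβ : ∀ n x, β n x = αp n x / δp n x)
    (hρ : ∀ n x, ρ n x = ηp n x / δp n x)
    (hβ0 : ∀ x, β 0 x = 0) (hρ0 : ∀ x, ρ 0 x = 0)
    (hα : ∀ n ∈ Finset.Icc 1 N,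
      αp n =ᵐ[μ] μ[fun x => ΔS n x * Aproc N w β ΔS n x | ℱ (n - 1)])
    (hη : ∀ n ∈ Finset.Icc 1 N,
      ηp n =ᵐ[μ] μ[fun x => ΔS n x *
        ∑ i ∈ Finset.Icc n N, H i x * w i x *
          ∏ j ∈ Finset.Icc (n + 1) i, (1 - β j x * ΔS j x) | ℱ (n - 1)])
    (hδ : ∀ n ∈ Finset.Icc 1 N,
      δp n =ᵐ[μ] μ[fun x => ΔS n x ^ 2 * Dproc N w β ΔS n x | ℱ (n - 1)])
    (ωc : ℕ → ℝ) (hωc : ∀ n x, w n x = ωc n)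
    (hmart : ∀ n ∈ Finset.Icc 1 N, μ[ΔS n | ℱ (n - 1)] =ᵐ[μ] 0)
    (c : ℝ) (ξstar : ℕ → Ω → ℝ)
    (hξ : ∀ n ∈ Finset.Icc 1 N, ∀ x, ξstar n x
      = ρ n x - β n x * (c + ∑ k ∈ Finset.Icc 1 (n - 1), ξstar k x * ΔS k x))
    (hHS : ∀ n i, Integrable (fun x => H i x * ΔS n x) μ) :
    ∀ n ∈ Finset.Icc 1 N,
      αp n =ᵐ[μ] 0 ∧
      β n =ᵐ[μ] 0 ∧
      ξstar n =ᵐ[μ] ρ n ∧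
      ρ n =ᵐ[μ] fun x =>
        (∑ i ∈ Finset.Icc n N, ωc i * (μ[fun y => H i y * ΔS n y | ℱ (n - 1)]) x)
          / (∑ i ∈ Finset.Icc n N, ωc i * (μ[fun y => ΔS n y ^ 2 | ℱ (n - 1)]) x) :=
  stmt_11_general μ N ℱ ΔS w H αp ηp δp β ρ hβ hρ hα hη hδ ωc hωc hmart c ξstar hξ hHS
end

section
/- In the Schachermayer example, with U uniform on [0,1], P(V=1|U)=U^2, P(V=-1|U)=1-U^2, F_1 = σ(U), ΔS_2 = V^+ (1+U) - 1: the ratio (E[ΔS_2|F_1])^2 / E[ΔS_2^2|F_1] equals (U^3 + U^2 - 1)^2 / (U^4 - U^2 + 1) almost surely, and its essential supremum equals 1, so the non-degeneracy condition fails. -/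
/-!
Given `U`, the increment `ΔS₂` equals `U` with probability `U²` and `-1` otherwise, so its
first two conditional moments are `-1 + (U + 1) U²` and `1 + (U² - 1) U²`. Their ratio is a
continuous function of `U` that is at most `1` on `[0, 1]` and equals `1` at `U = 0`; since `U`
is uniform, every neighbourhood of `0` carries positive mass, so the essential supremum is `1`.
-/

open MeasureTheory

/-- The σ-algebra generated by `U = Prod.fst` on `Ω = ℝ × ℝ`. -/
def sigmaU : MeasurableSpace (ℝ × ℝ) :=
  MeasurableSpace.comap (Prod.fst : ℝ × ℝ → ℝ) inferInstance

open Set Filter ENNReal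

theorem condExp_add_mul_ae_eq {Ω : Type*} {m m₀ : MeasurableSpace Ω} {μ : Measure Ω}
    [IsFiniteMeasure μ] (hm : m ≤ m₀) {a d f p : Ω → ℝ} {c : ℝ}
    (ha : StronglyMeasurable[m] a) (hai : Integrable a μ)
    (hd : StronglyMeasurable[m] d) (hdi : Integrable d μ)
    (hf : AEStronglyMeasurable f μ) (hfc : ∀ᵐ ω ∂μ, ‖f ω‖ ≤ c)
    (hfp : μ[f | m] =ᵐ[μ] p) :
    μ[a + d * f | m] =ᵐ[μ] a + d * p := by
  have hdf : Integrable (d * f) μ := hdi.mul_bdd hf hfc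
  calc μ[a + d * f | m] =ᵐ[μ] μ[a | m] + μ[d * f | m] := condExp_add hai hdf m
    _ =ᵐ[μ] a + d * μ[f | m] := by
      rw [condExp_of_stronglyMeasurable hm ha hai]
      exact EventuallyEq.rfl.add
        (condExp_mul_of_stronglyMeasurable_left hd hdf (.of_bound hf c hfc))
    _ =ᵐ[μ] a + d * p := EventuallyEq.rfl.add (EventuallyEq.rfl.mul hfp)

theorem essSup_volume_restrict_Icc_of_isMaxOn {f : ℝ → ℝ≥0∞} (hf : Continuous f)
    {a b x : ℝ} (hab : a < b) (hx : x ∈ Icc a b) (hmax : IsMaxOn f (Icc a b) x) :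
    essSup f (volume.restrict (Icc a b)) = f x := by
  refine le_antisymm (essSup_le_of_ae_le _ ?_) (not_lt.mp fun hlt => ?_)
  · filter_upwards [ae_restrict_mem measurableSet_Icc] with y hy using hmax hy
  · -- `f` exceeds its essential supremum on an open set meeting `Ioo a b`, of positive measure.
    set O := {y | essSup f (volume.restrict (Icc a b)) < f y}
    have hO : IsOpen O := isOpen_lt continuous_const hf
    have hne : (O ∩ Ioo a b).Nonempty := by
      have hxcl : x ∈ closure (Ioo a b) := by rwa [closure_Ioo hab.ne]
      exact mem_closure_iff.mp hxcl O hO hlt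
    have hpos : 0 < volume (O ∩ Ioo a b) := (hO.inter isOpen_Ioo).measure_pos volume hne
    have hzero : volume.restrict (Icc a b) O = 0 := meas_essSup_lt
    rw [Measure.restrict_apply' measurableSet_Icc] at hzero
    exact hpos.ne' (measure_mono_null (inter_subset_inter_right _ Ioo_subset_Icc_self) hzero)

theorem integrable_comp_fst_of_map_fst_eq {μ : Measure (ℝ × ℝ)}
    (hU : μ.map Prod.fst = volume.restrict (Icc (0 : ℝ) 1)) {g : ℝ → ℝ}
    (hg : Continuous g) : Integrable (fun x => g x.1) μ := by
  have : Integrable g (μ.map Prod.fst) := by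
    rw [hU]; exact hg.continuousOn.integrableOn_Icc
  exact this.comp_aemeasurable measurable_fst.aemeasurable

theorem stronglyMeasurable_sigmaU_comp_fst {g : ℝ → ℝ} (hg : Measurable g) :
    StronglyMeasurable[sigmaU] (fun x : ℝ × ℝ => g x.1) :=
  (hg.comp (comap_measurable Prod.fst)).stronglyMeasurable

theorem condExp_sigmaU_of_eq_ite {μ : Measure (ℝ × ℝ)} [IsFiniteMeasure μ]
    (hU : μ.map Prod.fst = volume.restrict (Icc (0 : ℝ) 1))
    (hcond : μ[(fun x : ℝ × ℝ => if x.2 = 1 then (1 : ℝ) else 0) | sigmaU]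
      =ᵐ[μ] fun x => x.1 ^ 2)
    {a b : ℝ → ℝ} (ha : Continuous a) (hb : Continuous b) {X : ℝ × ℝ → ℝ}
    (hX : ∀ᵐ x ∂μ, X x = if x.2 = 1 then b x.1 else a x.1) :
    μ[X | sigmaU] =ᵐ[μ] fun x => a x.1 + (b x.1 - a x.1) * x.1 ^ 2 := by
  set f : ℝ × ℝ → ℝ := fun x => if x.2 = 1 then 1 else 0
  have hXf : X =ᵐ[μ] (fun x => a x.1) + (fun x => b x.1 - a x.1) * f := by
    filter_upwards [hX] with x hx
    by_cases h : x.2 = 1 <;> simp [hx, f, h]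
  have hf : AEStronglyMeasurable f μ :=
    (Measurable.ite (measurable_snd (measurableSet_singleton 1)) measurable_const
      measurable_const).aestronglyMeasurable
  have hf1 : ∀ᵐ x ∂μ, ‖f x‖ ≤ 1 := .of_forall fun x => by
    by_cases h : x.2 = 1 <;> simp [f, h]
  exact (condExp_congr_ae hXf).trans <|
    condExp_add_mul_ae_eq measurable_fst.comap_le
      (stronglyMeasurable_sigmaU_comp_fst ha.measurable)
      (integrable_comp_fst_of_map_fst_eq hU ha)
      (stronglyMeasurable_sigmaU_comp_fst (hb.sub ha).measurable)
      (integrable_comp_fst_of_map_fst_eq hU (hb.sub ha)) hf hf1 hcond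

noncomputable def schachermayerRatio (u : ℝ) : ℝ :=
  (u ^ 3 + u ^ 2 - 1) ^ 2 / (u ^ 4 - u ^ 2 + 1)

theorem schachermayerRatio_denom_pos (u : ℝ) : 0 < u ^ 4 - u ^ 2 + 1 := by
  nlinarith [sq_nonneg (u ^ 2 - 2⁻¹)]

theorem continuous_schachermayerRatio : Continuous schachermayerRatio :=
  (by fun_prop : Continuous fun u : ℝ => (u ^ 3 + u ^ 2 - 1) ^ 2).div (by fun_prop)
    fun u => (schachermayerRatio_denom_pos u).ne'

theorem schachermayerRatio_zero : schachermayerRatio 0 = 1 := by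
  norm_num [schachermayerRatio]

-- The denominator minus the numerator is `u² (1 - u) (1 + u)³`.
theorem schachermayerRatio_le_one {u : ℝ} (hu : u ∈ Icc (0 : ℝ) 1) :
    schachermayerRatio u ≤ 1 := by
  rw [schachermayerRatio, div_le_one (schachermayerRatio_denom_pos u)]
  nlinarith [mul_nonneg (mul_nonneg (sq_nonneg u) (sub_nonneg.mpr hu.2))
    (pow_nonneg (by linarith [hu.1] : (0:ℝ) ≤ 1 + u) 3)]

theorem essSup_schachermayerRatio {μ : Measure (ℝ × ℝ)}
    (hU : μ.map Prod.fst = volume.restrict (Icc (0 : ℝ) 1)) :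
    essSup (fun x : ℝ × ℝ => ENNReal.ofReal (schachermayerRatio x.1)) μ = 1 := by
  have hR : Continuous fun u => ENNReal.ofReal (schachermayerRatio u) :=
    ENNReal.continuous_ofReal.comp continuous_schachermayerRatio
  have hmax : IsMaxOn (fun u => ENNReal.ofReal (schachermayerRatio u)) (Icc 0 1) 0 :=
    fun u hu => by
      simpa [schachermayerRatio_zero] using ENNReal.ofReal_le_ofReal (schachermayerRatio_le_one hu)
  rw [← Function.comp_def (fun u => ENNReal.ofReal (schachermayerRatio u)) Prod.fst,
    ← essSup_map_measure_of_measurable hR.measurable measurable_fst.aemeasurable, hU,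
    essSup_volume_restrict_Icc_of_isMaxOn hR zero_lt_one (left_mem_Icc.mpr zero_le_one) hmax,
    schachermayerRatio_zero, ENNReal.ofReal_one]

/-- Schachermayer's example: `Ω = ℝ × ℝ`, `U = fst` uniform on `[0,1]`, `V = snd ∈ {-1,1}`
with `P(V = 1 | U) = U²`, `F₁ = σ(U)`, and `ΔS₂ = V⁺ (1 + U) - 1`. Then
`(E[ΔS₂ | F₁])² / E[ΔS₂² | F₁] = (U³ + U² - 1)² / (U⁴ - U² + 1)` a.s., and the essential
supremum of this ratio equals `1`, so the non-degeneracy condition (a uniform bound by a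
constant `C < 1`) fails. -/
theorem stmt_12 (μ : Measure (ℝ × ℝ)) [IsProbabilityMeasure μ]
    (hU : μ.map Prod.fst = volume.restrict (Set.Icc (0 : ℝ) 1))
    (hV : ∀ᵐ x ∂μ, x.2 = 1 ∨ x.2 = -1)
    (hcond : μ[(fun x : ℝ × ℝ => if x.2 = 1 then (1 : ℝ) else 0) | sigmaU]
      =ᵐ[μ] fun x => x.1 ^ 2)
    (ΔS2 : ℝ × ℝ → ℝ) (hΔS2 : ∀ x, ΔS2 x = max x.2 0 * (1 + x.1) - 1) :
    ((fun x => (μ[ΔS2 | sigmaU]) x ^ 2 / (μ[fun y => ΔS2 y ^ 2 | sigmaU]) x)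
        =ᵐ[μ] fun x => (x.1 ^ 3 + x.1 ^ 2 - 1) ^ 2 / (x.1 ^ 4 - x.1 ^ 2 + 1)) ∧
    essSup (fun x : ℝ × ℝ =>
        ENNReal.ofReal ((x.1 ^ 3 + x.1 ^ 2 - 1) ^ 2 / (x.1 ^ 4 - x.1 ^ 2 + 1))) μ = 1 ∧
    ¬ ∃ C : ℝ, C < 1 ∧ ∀ᵐ x ∂μ,
        (μ[ΔS2 | sigmaU]) x ^ 2 / (μ[fun y => ΔS2 y ^ 2 | sigmaU]) x ≤ C := by
  have hΔ : ∀ᵐ x ∂μ, ΔS2 x = if x.2 = 1 then x.1 else -1 := by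
    filter_upwards [hV] with x hx
    rcases hx with h | h <;> norm_num [hΔS2, h]
  have hΔsq : ∀ᵐ x ∂μ, ΔS2 x ^ 2 = if x.2 = 1 then x.1 ^ 2 else 1 := by
    filter_upwards [hΔ] with x hx
    split_ifs at hx ⊢ <;> simp [hx]
  have hmean := condExp_sigmaU_of_eq_ite hU hcond continuous_const continuous_id hΔ
  have hsq := condExp_sigmaU_of_eq_ite hU hcond continuous_const (continuous_pow 2) hΔsq
  have hratio : (fun x => (μ[ΔS2 | sigmaU]) x ^ 2 / (μ[fun y => ΔS2 y ^ 2 | sigmaU]) x)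
      =ᵐ[μ] fun x => schachermayerRatio x.1 := by
    filter_upwards [hmean, hsq] with x h₁ h₂
    rw [h₁, h₂, schachermayerRatio, id]
    congr 1 <;> ring
  refine ⟨hratio, essSup_schachermayerRatio hU, fun ⟨C, hC, hle⟩ => ?_⟩
  have hbound : essSup (fun x : ℝ × ℝ => ENNReal.ofReal (schachermayerRatio x.1)) μ
      ≤ ENNReal.ofReal C := essSup_le_of_ae_le _ <| by
    filter_upwards [hratio, hle] with x h₁ h₂ using ENNReal.ofReal_le_ofReal (h₁ ▸ h₂)
  rw [essSup_schachermayerRatio hU] at hbound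
  exact hbound.not_gt (ENNReal.ofReal_lt_one.mpr hC)
end

section
/- In the Schachermayer example with claims H_1 = 1, H_2 = (1/U + 1) V^+ and weights ω_1 = 1, ω_2 = V^+: the strategy ξ*_1 = 1 - c, ξ*_2 = 1/U^2 satisfies ξ*_1 ΔS_1 ∈ L^2(P), ξ*_2 ΔS_2 is F_1-conditionally square integrable (E[(ξ*_2 ΔS_2)^2 | F_1] < ∞ a.s.), but E[(ξ*_2 ΔS_2)^2] = ∞, i.e., ξ*_2 ΔS_2 is locally square integrable but not square integrable. -/
/-!
Given `U`, the conditional law `condExpKernel μ σ(U)` keeps `U` fixed and puts mass `U²` on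
`V = 1`, where `(ξ*₂ ΔS₂)² = U⁻²`, and mass `1 - U²` on `V = -1`, where `(ξ*₂ ΔS₂)² = U⁻⁴`.
So `E[(ξ*₂ ΔS₂)² | U] = (U⁴ - U² + 1) / U⁴`, finite for `U ∈ (0, 1]`; but this dominates `1 / U`,
which is not integrable near `0`, so `E[(ξ*₂ ΔS₂)²] = ∞`.
-/

open MeasureTheory ProbabilityTheory

open Set
open scoped ENNReal

section CondExpKernel

variable {Ω : Type*} {m : MeasurableSpace Ω} [mΩ : MeasurableSpace Ω] [StandardBorelSpace Ω]
  {μ : Measure Ω} [IsFiniteMeasure μ]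

lemma ae_ae_condExpKernel_of_ae_diag (hm : m ≤ mΩ) {p : Ω × Ω → Prop}
    (hp : MeasurableSet[m.prod mΩ] {z | p z}) (h : ∀ᵐ ω ∂μ, p (ω, ω)) :
    ∀ᵐ ω ∂μ, ∀ᵐ y ∂condExpKernel μ m ω, p (ω, y) := by
  have hdiag : Measurable[mΩ, m.prod mΩ] Function.diag :=
    (measurable_id'' hm).prodMk measurable_id
  have : ∀ᵐ z ∂(μ.trim hm ⊗ₘ condExpKernel μ m), p z := by
    rw [compProd_trim_condExpKernel]
    exact (ae_map_iff (@Measurable.aemeasurable _ _ _ (m.prod mΩ) _ _ hdiag) hp).2 h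
  exact ae_of_ae_trim hm (Measure.ae_ae_of_ae_compProd this)

lemma ae_ae_condExpKernel_of_ae (hm : m ≤ mΩ) {p : Ω → Prop} (hp : MeasurableSet {ω | p ω})
    (h : ∀ᵐ ω ∂μ, p ω) : ∀ᵐ ω ∂μ, ∀ᵐ y ∂condExpKernel μ m ω, p y :=
  ae_ae_condExpKernel_of_ae_diag hm (p := fun z => p z.2) (measurable_snd hp) h

lemma ae_ae_condExpKernel_eq {β : Type*} [MeasurableSpace β] [MeasurableEq β] (hm : m ≤ mΩ)
    {g : Ω → β} (hg : Measurable[m] g) :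
    ∀ᵐ ω ∂μ, ∀ᵐ y ∂condExpKernel μ m ω, g y = g ω :=
  ae_ae_condExpKernel_of_ae_diag hm (p := fun z => g z.2 = g z.1)
    (measurableSet_eq_fun ((hg.mono hm le_rfl).comp measurable_snd) (hg.comp measurable_fst))
    (ae_of_all _ fun _ => rfl)

lemma lintegral_lintegral_condExpKernel (hm : m ≤ mΩ) {f : Ω → ℝ≥0∞} (hf : Measurable f) :
    ∫⁻ ω, ∫⁻ y, f y ∂condExpKernel μ m ω ∂μ = ∫⁻ ω, f ω ∂μ := by
  conv_rhs => rw [← condExpKernel_comp_trim (μ := μ) hm]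
  rw [Measure.lintegral_bind (Kernel.aemeasurable _) hf.aemeasurable,
    lintegral_trim hm (hf.lintegral_kernel)]

end CondExpKernel

lemma lintegral_Ioo_zero_one_ofReal_inv_eq_top :
    ∫⁻ u in Ioo (0 : ℝ) 1, ENNReal.ofReal u⁻¹ = ⊤ := by
  by_contra h
  have hint : IntegrableOn (fun u : ℝ => u⁻¹) (Ioo 0 1) :=
    (lintegral_ofReal_ne_top_iff_integrable measurable_inv.aestronglyMeasurable
      ((ae_restrict_mem measurableSet_Ioo).mono fun u hu => inv_nonneg.2 hu.1.le)).1 h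
  rw [← intervalIntegrable_iff_integrableOn_Ioo_of_le zero_le_one] at hint
  simp at hint

lemma lintegral_Icc_ofReal_quartic_div_pow_four_eq_top :
    ∫⁻ u in Icc (0 : ℝ) 1, ENNReal.ofReal ((u ^ 4 - u ^ 2 + 1) / u ^ 4) = ⊤ := by
  have hle : ∀ u ∈ Ioo (0 : ℝ) 1, u⁻¹ ≤ (u ^ 4 - u ^ 2 + 1) / u ^ 4 := by
    intro u ⟨hu0, hu1⟩
    rw [inv_eq_one_div, div_le_div_iff₀ hu0 (by positivity)]
    have hcube : u ^ 3 ≤ u := by nlinarith [mul_pos hu0 hu0]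
    nlinarith [mul_nonneg (mul_nonneg hu0.le (sub_nonneg.2 hu1.le))
      (by linarith : 0 ≤ 1 + u - u ^ 3)]
  refine top_le_iff.1 ?_
  calc ⊤ = ∫⁻ u in Ioo (0 : ℝ) 1, ENNReal.ofReal u⁻¹ :=
        lintegral_Ioo_zero_one_ofReal_inv_eq_top.symm
    _ ≤ ∫⁻ u in Ioo (0 : ℝ) 1, ENNReal.ofReal ((u ^ 4 - u ^ 2 + 1) / u ^ 4) :=
      setLIntegral_mono (by fun_prop) fun u hu => ENNReal.ofReal_le_ofReal (hle u hu)
    _ ≤ _ := lintegral_mono_set Ioo_subset_Icc_self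

section SchachermayerExample

/-- `ξ*₂ ΔS₂` on `Ω = ℝ × ℝ`, with `U = x.1` and `V = x.2`. -/
noncomputable def gain₂ (x : ℝ × ℝ) : ℝ := 1 / x.1 ^ 2 * (max x.2 0 * (1 + x.1) - 1)

lemma measurable_gain₂ : Measurable gain₂ := by
  unfold gain₂; fun_prop

lemma sigmaU_le : sigmaU ≤ (inferInstance : MeasurableSpace (ℝ × ℝ)) :=
  measurable_fst.comap_le

lemma measurable_fst_sigmaU : Measurable[sigmaU] (Prod.fst : ℝ × ℝ → ℝ) :=
  comap_measurable _

variable {μ : Measure (ℝ × ℝ)}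

lemma ae_fst_mem_Ioc (hU : μ.map Prod.fst = volume.restrict (Icc (0 : ℝ) 1)) :
    ∀ᵐ x ∂μ, x.1 ∈ Ioc (0 : ℝ) 1 := by
  refine ae_of_ae_map measurable_fst.aemeasurable ?_
  rw [hU, Measure.restrict_congr_set Ioc_ae_eq_Icc.symm]
  exact ae_restrict_mem measurableSet_Ioc

variable [IsProbabilityMeasure μ]

lemma ae_condExpKernel_snd_eq_one
    (hcond : μ[(fun x : ℝ × ℝ => if x.2 = 1 then (1 : ℝ) else 0) | sigmaU]
      =ᵐ[μ] fun x => x.1 ^ 2) :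
    ∀ᵐ x ∂μ, condExpKernel μ sigmaU x {y | y.2 = 1} = ENNReal.ofReal (x.1 ^ 2) := by
  have hT : MeasurableSet {y : ℝ × ℝ | y.2 = 1} := measurable_snd (measurableSet_singleton 1)
  have hind : (fun x : ℝ × ℝ => if x.2 = 1 then (1 : ℝ) else 0)
      = {y | y.2 = 1}.indicator fun _ => 1 := funext fun y => by simp [Set.indicator_apply]
  rw [hind] at hcond
  filter_upwards [condExpKernel_ae_eq_condExp sigmaU_le hT, hcond] with x hκ hx
  rw [← hx, ← hκ, measureReal_def, ENNReal.ofReal_toReal (measure_ne_top _ _)]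

lemma ae_lintegral_condExpKernel_gain₂_sq
    (hU : μ.map Prod.fst = volume.restrict (Icc (0 : ℝ) 1))
    (hV : ∀ᵐ x ∂μ, x.2 = 1 ∨ x.2 = -1)
    (hcond : μ[(fun x : ℝ × ℝ => if x.2 = 1 then (1 : ℝ) else 0) | sigmaU]
      =ᵐ[μ] fun x => x.1 ^ 2) :
    ∀ᵐ x ∂μ, ∫⁻ y, ENNReal.ofReal (gain₂ y ^ 2) ∂condExpKernel μ sigmaU x
      = ENNReal.ofReal ((x.1 ^ 4 - x.1 ^ 2 + 1) / x.1 ^ 4) := by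
  set T : Set (ℝ × ℝ) := {y | y.2 = 1}
  have hT : MeasurableSet T := measurable_snd (measurableSet_singleton 1)
  filter_upwards [ae_ae_condExpKernel_eq sigmaU_le measurable_fst_sigmaU,
    ae_ae_condExpKernel_of_ae (p := fun y => y.2 = 1 ∨ y.2 = -1) sigmaU_le
      (hT.union (measurable_snd (measurableSet_singleton (-1)))) hV,
    ae_condExpKernel_snd_eq_one hcond, ae_fst_mem_Ioc hU] with x hfst hκV hκT hx
  set κ := condExpKernel μ sigmaU x
  have hκTc : κ Tᶜ = ENNReal.ofReal (1 - x.1 ^ 2) := by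
    rw [prob_compl_eq_one_sub hT, hκT, ← ENNReal.ofReal_one,
      ← ENNReal.ofReal_sub _ (sq_nonneg _)]
  have hon : ∫⁻ y in T, ENNReal.ofReal (gain₂ y ^ 2) ∂κ = ENNReal.ofReal (1 / x.1 ^ 2) * κ T := by
    rw [← setLIntegral_const]
    refine setLIntegral_congr_fun_ae hT ?_
    filter_upwards [hfst] with y hy (hyT : y.2 = 1)
    norm_num [gain₂, hy, hyT]
    field_simp
  have hoff : ∫⁻ y in Tᶜ, ENNReal.ofReal (gain₂ y ^ 2) ∂κ
      = ENNReal.ofReal (1 / x.1 ^ 4) * κ Tᶜ := by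
    rw [← setLIntegral_const]
    refine setLIntegral_congr_fun_ae hT.compl ?_
    filter_upwards [hfst, hκV] with y hy hyV hyT
    norm_num [gain₂, hy, hyV.resolve_left hyT]
    field_simp
  have hx0 : x.1 ≠ 0 := hx.1.ne'
  have hx1 : 0 ≤ 1 - x.1 ^ 2 := by nlinarith [hx.1, hx.2]
  rw [← lintegral_add_compl _ hT, hon, hoff, hκT, hκTc, ← ENNReal.ofReal_mul (by positivity),
    ← ENNReal.ofReal_mul (by positivity), ← ENNReal.ofReal_add (by positivity) (by positivity)]
  congr 1
  field_simp
  ring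

end SchachermayerExample

/-- Schachermayer's example: with `ΔS₁ = 1`, `ΔS₂ = V⁺(1 + U) - 1`, claims `H₁ = 1`,
`H₂ = (1/U + 1) V⁺`, weights `ω₁ = 1`, `ω₂ = V⁺`, and strategy `ξ*₁ = 1 - c`,
`ξ*₂ = 1/U²`: one has `ξ*₁ ΔS₁ ∈ L²(P)`, `ξ*₂ ΔS₂` is `F₁ = σ(U)`-conditionally square
integrable (its conditional second moment is a.s. finite), but `E[(ξ*₂ ΔS₂)²] = ∞`,
i.e. `ξ*₂ ΔS₂` is locally square integrable but not square integrable. -/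
theorem stmt_13 (μ : Measure (ℝ × ℝ)) [IsProbabilityMeasure μ]
    (hU : μ.map Prod.fst = volume.restrict (Set.Icc (0 : ℝ) 1))
    (hV : ∀ᵐ x ∂μ, x.2 = 1 ∨ x.2 = -1)
    (hcond : μ[(fun x : ℝ × ℝ => if x.2 = 1 then (1 : ℝ) else 0) | sigmaU]
      =ᵐ[μ] fun x => x.1 ^ 2)
    (ΔS2 : ℝ × ℝ → ℝ) (hΔS2 : ∀ x, ΔS2 x = max x.2 0 * (1 + x.1) - 1)
    (c : ℝ) :
    MemLp (fun _ : ℝ × ℝ => (1 - c) * (1 : ℝ)) 2 μ ∧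
    (∀ᵐ x ∂μ, ∫⁻ y, ENNReal.ofReal ((1 / y.1 ^ 2 * ΔS2 y) ^ 2)
        ∂(condExpKernel μ sigmaU x) < ⊤) ∧
    (∫⁻ x, ENNReal.ofReal ((1 / x.1 ^ 2 * ΔS2 x) ^ 2) ∂μ = ⊤) ∧
    ¬ MemLp (fun x => 1 / x.1 ^ 2 * ΔS2 x) 2 μ := by
  obtain rfl : ΔS2 = fun x => max x.2 0 * (1 + x.1) - 1 := funext hΔS2
  have hmoment := ae_lintegral_condExpKernel_gain₂_sq hU hV hcond
  have htop : ∫⁻ x, ENNReal.ofReal (gain₂ x ^ 2) ∂μ = ⊤ := by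
    rw [← lintegral_lintegral_condExpKernel sigmaU_le
        (measurable_gain₂.pow_const 2).ennreal_ofReal,
      lintegral_congr_ae hmoment,
      ← lintegral_map (f := fun u => ENNReal.ofReal ((u ^ 4 - u ^ 2 + 1) / u ^ 4))
        (by fun_prop) measurable_fst, hU]
    exact lintegral_Icc_ofReal_quartic_div_pow_four_eq_top
  exact ⟨memLp_const _, hmoment.mono fun x hx => hx ▸ ENNReal.ofReal_lt_top, htop,
    fun h => h.integrable_sq.lintegral_lt_top.ne htop⟩
end

section
/- In the Schachermayer example, the conditional-expectation coefficients at time 2 for the claim (H,ω) with H_2 = (1/U + 1)V^+, ω_2 = V^+ are: α_2 := E[ω_2 ΔS_2 | F_1] = U^3, η_2 := E[ω_2 H_2 ΔS_2 | F_1] = U^3 + U^2, δ_2 := E[ω_2 ΔS_2^2 | F_1] = U^4, hence β_2 = α_2/δ_2 = 1/U and ρ_2 = η_2/δ_2 = (1+U)/U^2 almost surely. -/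
open MeasureTheory

/-- Schachermayer's example, coefficients at time 2 for the claim
`H₂ = (1/U + 1) V⁺` with weight `ω₂ = V⁺`:
`α₂ = E[ω₂ ΔS₂ | F₁] = U³`, `η₂ = E[ω₂ H₂ ΔS₂ | F₁] = U³ + U²`,
`δ₂ = E[ω₂ ΔS₂² | F₁] = U⁴`, hence `β₂ = α₂/δ₂ = 1/U` and
`ρ₂ = η₂/δ₂ = (1 + U)/U²` almost surely. -/
theorem stmt_14 (μ : Measure (ℝ × ℝ)) [IsProbabilityMeasure μ]
    (hU : μ.map Prod.fst = volume.restrict (Set.Icc (0 : ℝ) 1))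
    (hV : ∀ᵐ x ∂μ, x.2 = 1 ∨ x.2 = -1)
    (hcond : μ[(fun x : ℝ × ℝ => if x.2 = 1 then (1 : ℝ) else 0) | sigmaU]
      =ᵐ[μ] fun x => x.1 ^ 2)
    (ΔS2 w2 H2 : ℝ × ℝ → ℝ)
    (hΔS2 : ∀ x, ΔS2 x = max x.2 0 * (1 + x.1) - 1)
    (hw2 : ∀ x, w2 x = max x.2 0)
    (hH2 : ∀ x, H2 x = (1 / x.1 + 1) * max x.2 0) :
    (μ[fun x => w2 x * ΔS2 x | sigmaU] =ᵐ[μ] fun x => x.1 ^ 3) ∧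
    (μ[fun x => w2 x * H2 x * ΔS2 x | sigmaU] =ᵐ[μ] fun x => x.1 ^ 3 + x.1 ^ 2) ∧
    (μ[fun x => w2 x * ΔS2 x ^ 2 | sigmaU] =ᵐ[μ] fun x => x.1 ^ 4) ∧
    ((fun x => (μ[fun y => w2 y * ΔS2 y | sigmaU]) x
        / (μ[fun y => w2 y * ΔS2 y ^ 2 | sigmaU]) x) =ᵐ[μ] fun x => 1 / x.1) ∧
    ((fun x => (μ[fun y => w2 y * H2 y * ΔS2 y | sigmaU]) x
        / (μ[fun y => w2 y * ΔS2 y ^ 2 | sigmaU]) x) =ᵐ[μ] fun x => (1 + x.1) / x.1 ^ 2) := by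
  have hle : sigmaU ≤ (inferInstance : MeasurableSpace (ℝ × ℝ)) :=
    measurable_fst.comap_le
  set e : ℝ × ℝ → ℝ := fun x => if x.2 = 1 then (1 : ℝ) else 0 with he
  have hemeas : Measurable e := by
    refine Measurable.ite ?_ measurable_const measurable_const
    exact measurableSet_eq_fun measurable_snd measurable_const
  have hebd : ∀ x, |e x| ≤ 1 := by
    intro x; simp only [he]; split <;> norm_num
  -- a.e. facts about the first coordinate
  have hIcc : ∀ᵐ x ∂μ, x.1 ∈ Set.Icc (0 : ℝ) 1 := by
    have h1 : ∀ᵐ u ∂(μ.map Prod.fst), u ∈ Set.Icc (0 : ℝ) 1 := by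
      rw [hU]; exact ae_restrict_mem measurableSet_Icc
    exact ae_of_ae_map measurable_fst.aemeasurable h1
  have hne : ∀ᵐ x ∂μ, x.1 ≠ 0 := by
    have h1 : ∀ᵐ u ∂(μ.map Prod.fst), u ≠ 0 := by
      rw [hU]
      refine ae_restrict_of_ae ?_
      rw [ae_iff]
      simp only [not_not, Set.setOf_eq_eq_singleton]
      exact Real.volume_singleton
    exact ae_of_ae_map measurable_fst.aemeasurable h1
  have hmeas_fst : @Measurable _ _ sigmaU _ (Prod.fst : ℝ × ℝ → ℝ) :=
    fun s hs => ⟨s, hs, rfl⟩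
  -- generic conditional expectation computation
  have key : ∀ g : ℝ → ℝ, Measurable g → (∀ᵐ x ∂μ, |g x.1| ≤ 2) →
      μ[fun x => g x.1 * e x | sigmaU] =ᵐ[μ] fun x => g x.1 * x.1 ^ 2 := by
    intro g hg hb
    have hsm : StronglyMeasurable[sigmaU] (fun x : ℝ × ℝ => g x.1) :=
      (hg.comp hmeas_fst).stronglyMeasurable
    have hie : Integrable e μ := by
      refine Integrable.mono' (integrable_const 1) hemeas.aestronglyMeasurable ?_
      filter_upwards with x
      simpa using hebd x
    have hig : Integrable (fun x => g x.1 * e x) μ := by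
      refine Integrable.mono' (integrable_const 2)
        ((hg.comp measurable_fst).mul hemeas).aestronglyMeasurable ?_
      filter_upwards [hb] with x hx
      calc ‖g x.1 * e x‖ = |g x.1| * |e x| := abs_mul _ _
        _ ≤ 2 * 1 := mul_le_mul hx (hebd x) (abs_nonneg _) (by norm_num)
        _ = 2 := by ring
    have hmul := condExp_mul_of_stronglyMeasurable_left hsm hig hie
    refine hmul.trans ?_
    filter_upwards [hcond] with x hx
    simp only [Pi.mul_apply, hx]
  -- α₂
  have hα : μ[fun x => w2 x * ΔS2 x | sigmaU] =ᵐ[μ] fun x => x.1 ^ 3 := by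
    have h1 : (fun x => w2 x * ΔS2 x) =ᵐ[μ] fun x => x.1 * e x := by
      filter_upwards [hV] with x hx
      rcases hx with h | h <;> simp [hw2, hΔS2, he, h] <;> norm_num <;> ring
    refine (condExp_congr_ae h1).trans ?_
    have h2 := key (fun u => u) measurable_id
      (by filter_upwards [hIcc] with x hx
          rw [abs_le]; constructor <;> [linarith [hx.1]; linarith [hx.2]])
    refine h2.trans ?_
    filter_upwards with x
    ring
  -- η₂
  have hη : μ[fun x => w2 x * H2 x * ΔS2 x | sigmaU] =ᵐ[μ]
      fun x => x.1 ^ 3 + x.1 ^ 2 := by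
    have h1 : (fun x => w2 x * H2 x * ΔS2 x) =ᵐ[μ] fun x => (1 + x.1) * e x := by
      filter_upwards [hV, hne] with x hx hx0
      rcases hx with h | h
      · simp only [hw2, hH2, hΔS2, he, h]
        norm_num
        field_simp
      · norm_num [hw2, hH2, hΔS2, he, h]
    refine (condExp_congr_ae h1).trans ?_
    have h2 := key (fun u => 1 + u) (measurable_const.add measurable_id)
      (by filter_upwards [hIcc] with x hx;
          rw [abs_le]; constructor <;> [linarith [hx.1]; linarith [hx.2]])
    refine h2.trans ?_
    filter_upwards with x
    ring
  -- δ₂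
  have hδ : μ[fun x => w2 x * ΔS2 x ^ 2 | sigmaU] =ᵐ[μ] fun x => x.1 ^ 4 := by
    have h1 : (fun x => w2 x * ΔS2 x ^ 2) =ᵐ[μ] fun x => x.1 ^ 2 * e x := by
      filter_upwards [hV] with x hx
      rcases hx with h | h
      · simp only [hw2, hΔS2, he, h]
        norm_num
      · norm_num [hw2, hΔS2, he, h]
    refine (condExp_congr_ae h1).trans ?_
    have h2 := key (fun u => u ^ 2) (measurable_id.pow_const 2)
      (by filter_upwards [hIcc] with x hx;
          rw [abs_le]; constructor <;> nlinarith [hx.1, hx.2])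
    refine h2.trans ?_
    filter_upwards with x
    ring
  refine ⟨hα, hη, hδ, ?_, ?_⟩
  · filter_upwards [hα, hδ, hne] with x h1 h2 h0
    rw [h1, h2]
    field_simp
  · filter_upwards [hη, hδ, hne] with x h1 h2 h0
    rw [h1, h2]
    field_simp
    ring
end

section
/- In the Schachermayer example with claim weights ω̄_2 = V^- (the negative part of V): ᾱ_2 := E[ω̄_2 ΔS_2 | F_1] = U^2 - 1, η̄_2 := E[ω̄_2 H̄_2 ΔS_2 | F_1] = 0 where H̄_2 = (1/U+1)V^+, and δ̄_2 := E[ω̄_2 ΔS_2^2 | F_1] = 1 - U^2, so β̄_2 = -1 and ρ̄_2 = 0, and the resulting optimal strategy ξ̄*_1 = 1 - c, ξ̄*_2 = c satisfies ξ̄*_2 ΔS_2 ∈ L^2(P). -/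
open MeasureTheory

/-!
Where `V > 0` the weight `V⁻` vanishes and where `V ≤ 0` the increment `ΔS₂` is `-1`, so pointwise
`V⁻ ΔS₂ = -V⁻`, `V⁻ ΔS₂² = V⁻` and `V⁻ H̄₂ ΔS₂ = 0`. Since `V⁻ = 1 - 1_{V = 1}` almost surely,
`E[V⁻ | U] = 1 - U²`, which is nonzero because the uniform `U` is almost surely `< 1`.
Finally `|ΔS₂| ≤ 1` gives square integrability.
-/

section Pointwise

variable (u v : ℝ)

lemma max_neg_mul_max_eq_zero : max (-v) 0 * max v 0 = 0 := by
  rcases le_total v 0 with hv | hv <;> simp [hv]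

lemma max_neg_mul_increment : max (-v) 0 * (max v 0 * (1 + u) - 1) = -max (-v) 0 := by
  linear_combination (1 + u) * max_neg_mul_max_eq_zero v

lemma max_neg_mul_increment_sq : max (-v) 0 * (max v 0 * (1 + u) - 1) ^ 2 = max (-v) 0 := by
  linear_combination (max v 0 * (1 + u) ^ 2 - 2 * (1 + u)) * max_neg_mul_max_eq_zero v

lemma max_neg_mul_mul_max_mul_eq_zero (a b : ℝ) : max (-v) 0 * (a * max v 0) * b = 0 := by
  linear_combination a * b * max_neg_mul_max_eq_zero v

lemma abs_increment_le_one (hu : u ∈ Set.Icc (0 : ℝ) 1) (hv : v = 1 ∨ v = -1) :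
    |max v 0 * (1 + u) - 1| ≤ 1 := by
  rcases hv with rfl | rfl
  · rw [max_eq_left zero_le_one, one_mul, abs_le]
    constructor <;> linarith [hu.1, hu.2]
  · norm_num

end Pointwise

lemma condExp_negPart_of_sign {α : Type*} {m m₀ : MeasurableSpace α} {μ : Measure α}
    [IsFiniteMeasure μ] (hm : m ≤ m₀) {V p : α → ℝ} (hVm : Measurable V)
    (hV : ∀ᵐ x ∂μ, V x = 1 ∨ V x = -1)
    (hp : μ[fun x => if V x = 1 then (1 : ℝ) else 0 | m] =ᵐ[μ] p) :
    μ[fun x => max (-V x) 0 | m] =ᵐ[μ] fun x => 1 - p x := by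
  set I : α → ℝ := fun x => if V x = 1 then 1 else 0
  have hI : Integrable I μ :=
    (integrable_const (1 : ℝ)).indicator (hVm (measurableSet_singleton 1))
  have h_eq : (fun x => max (-V x) 0) =ᵐ[μ] (fun _ => (1 : ℝ)) - I := by
    filter_upwards [hV] with x hx
    rcases hx with hx | hx <;> norm_num [I, hx]
  filter_upwards [condExp_congr_ae h_eq, condExp_sub (integrable_const 1) hI m, hp]
    with x h_congr h_sub hpx
  rw [h_congr, h_sub, Pi.sub_apply, condExp_const hm, hpx]

lemma ae_fst_mem_Ico_of_map_fst_eq {μ : Measure (ℝ × ℝ)}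
    (hU : μ.map Prod.fst = volume.restrict (Set.Icc (0 : ℝ) 1)) :
    ∀ᵐ x ∂μ, x.1 ∈ Set.Ico (0 : ℝ) 1 := by
  have h : ∀ᵐ u ∂(volume.restrict (Set.Icc (0 : ℝ) 1)), u ∈ Set.Ico (0 : ℝ) 1 :=
    ae_restrict_of_ae_eq_of_ae_restrict Ico_ae_eq_Icc (ae_restrict_mem measurableSet_Ico)
  exact ae_of_ae_map measurable_fst.aemeasurable (hU ▸ h)

/-- Schachermayer's example with weight `ω̄₂ = V⁻` and claim `H̄₂ = (1/U + 1) V⁺`: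
`ᾱ₂ = E[ω̄₂ ΔS₂ | F₁] = U² - 1`, `η̄₂ = E[ω̄₂ H̄₂ ΔS₂ | F₁] = 0`,
`δ̄₂ = E[ω̄₂ ΔS₂² | F₁] = 1 - U²`, so `β̄₂ = ᾱ₂/δ̄₂ = -1` and `ρ̄₂ = η̄₂/δ̄₂ = 0`
(wherever `δ̄₂ ≠ 0`), and the resulting optimal strategy `ξ̄*₁ = 1 - c`, `ξ̄*₂ = c`
satisfies `ξ̄*₂ ΔS₂ ∈ L²(P)`. -/
theorem stmt_15 (μ : Measure (ℝ × ℝ)) [IsProbabilityMeasure μ]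
    (hU : μ.map Prod.fst = volume.restrict (Set.Icc (0 : ℝ) 1))
    (hV : ∀ᵐ x ∂μ, x.2 = 1 ∨ x.2 = -1)
    (hcond : μ[(fun x : ℝ × ℝ => if x.2 = 1 then (1 : ℝ) else 0) | sigmaU]
      =ᵐ[μ] fun x => x.1 ^ 2)
    (ΔS2 wbar2 Hbar2 : ℝ × ℝ → ℝ)
    (hΔS2 : ∀ x, ΔS2 x = max x.2 0 * (1 + x.1) - 1)
    (hw2 : ∀ x, wbar2 x = max (-x.2) 0)
    (hH2 : ∀ x, Hbar2 x = (1 / x.1 + 1) * max x.2 0)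
    (c : ℝ) :
    (μ[fun x => wbar2 x * ΔS2 x | sigmaU] =ᵐ[μ] fun x => x.1 ^ 2 - 1) ∧
    (μ[fun x => wbar2 x * Hbar2 x * ΔS2 x | sigmaU] =ᵐ[μ] 0) ∧
    (μ[fun x => wbar2 x * ΔS2 x ^ 2 | sigmaU] =ᵐ[μ] fun x => 1 - x.1 ^ 2) ∧
    ((fun x => (μ[fun y => wbar2 y * ΔS2 y | sigmaU]) x
        / (μ[fun y => wbar2 y * ΔS2 y ^ 2 | sigmaU]) x) =ᵐ[μ] fun _ => (-1 : ℝ)) ∧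
    ((fun x => (μ[fun y => wbar2 y * Hbar2 y * ΔS2 y | sigmaU]) x
        / (μ[fun y => wbar2 y * ΔS2 y ^ 2 | sigmaU]) x) =ᵐ[μ] fun _ => (0 : ℝ)) ∧
    MemLp (fun x => c * ΔS2 x) 2 μ := by
  obtain rfl : ΔS2 = _ := funext hΔS2
  obtain rfl : wbar2 = _ := funext hw2
  obtain rfl : Hbar2 = _ := funext hH2
  beta_reduce
  have hm : sigmaU ≤ Prod.instMeasurableSpace := measurable_fst.comap_le
  have hV_neg := condExp_negPart_of_sign hm measurable_snd hV hcond
  have hα : μ[fun x => max (-x.2) 0 * (max x.2 0 * (1 + x.1) - 1) | sigmaU]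
      =ᵐ[μ] fun x => x.1 ^ 2 - 1 := by
    simp_rw [max_neg_mul_increment]
    filter_upwards [condExp_neg (fun x : ℝ × ℝ => max (-x.2) 0) sigmaU, hV_neg] with x h_neg hx
    rw [← Pi.neg_def, h_neg, Pi.neg_apply, hx, neg_sub]
  have hη : μ[fun x => max (-x.2) 0 * ((1 / x.1 + 1) * max x.2 0) * (max x.2 0 * (1 + x.1) - 1)
      | sigmaU] = 0 := by
    simp_rw [max_neg_mul_mul_max_mul_eq_zero]
    exact condExp_zero
  have hδ : μ[fun x => max (-x.2) 0 * (max x.2 0 * (1 + x.1) - 1) ^ 2 | sigmaU]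
      =ᵐ[μ] fun x => 1 - x.1 ^ 2 := by
    simpa only [max_neg_mul_increment_sq] using hV_neg
  have hU' := ae_fst_mem_Ico_of_map_fst_eq hU
  refine ⟨hα, hη.eventuallyEq, hδ, ?_, ?_, ?_⟩
  · filter_upwards [hα, hδ, hU'] with x hαx hδx hu
    have : 1 - x.1 ^ 2 ≠ 0 := by nlinarith [hu.1, hu.2]
    rw [hαx, hδx, ← neg_sub, neg_div_self this]
  · filter_upwards with x
    rw [hη, Pi.zero_apply, zero_div]
  · refine (MemLp.of_bound ?_ 1 ?_).const_mul c
    · fun_prop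
    · filter_upwards [hV, hU'] with x hv hu
      exact abs_increment_le_one x.1 x.2 (Set.Ico_subset_Icc_self hu) hv
end
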